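/- arXiv:0902.3036 — 14 statements merged into one kernel-verified Lean document; each statement's English description precedes it below -/
import Mathlib

section
/- For all x with 0 < x < 1, arcsin x > 6(√(1+x) − √(1−x)) / (4 + √(1+x) + √(1−x)). -/
/-!
Writing `x = sin (2u)` with `u = arcsin x / 2 ∈ (0, π/4]`, the square roots become
`√(1 ± x) = cos u ± sin u`, and the inequality turns into Cusa's inequality
`3 sin u < u (2 + cos u)`. The derivative of `u (2 + cos u) - 3 sin u` is
`2 - 2 cos u - u sin u = 4 sin (u/2) (sin (u/2) - (u/2) cos (u/2))`, which is positive on `(0, π)`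
because `tan v > v` on `(0, π/2)`.
-/

open Real

namespace Real

lemma mul_cos_lt_sin {v : ℝ} (h0 : 0 < v) (h1 : v < π / 2) : v * cos v < sin v := by
  have hcos : 0 < cos v := cos_pos_of_mem_Ioo ⟨by linarith, h1⟩
  have htan := lt_tan h0 h1
  rwa [tan_eq_sin_div_cos, lt_div_iff₀ hcos] at htan

lemma mul_sin_lt_two_sub_two_mul_cos {s : ℝ} (h0 : 0 < s) (h1 : s < π) :
    s * sin s < 2 - 2 * cos s := by
  obtain ⟨v, rfl⟩ : ∃ v, s = 2 * v := ⟨s / 2, by ring⟩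
  have hsin : 0 < sin v := sin_pos_of_pos_of_lt_pi (by linarith) (by linarith)
  have hkey := mul_cos_lt_sin (v := v) (by linarith) (by linarith)
  rw [sin_two_mul, cos_two_mul]
  nlinarith [sin_sq_add_cos_sq v]

theorem three_mul_sin_lt_mul_two_add_cos {t : ℝ} (ht : 0 < t) : 3 * sin t < t * (2 + cos t) := by
  rcases le_or_gt t π with htπ | htπ
  · let g : ℝ → ℝ := fun t ↦ t * (2 + cos t) - 3 * sin t
    have hg : ∀ s, HasDerivAt g (2 - 2 * cos s - s * sin s) s := fun s ↦
      ((hasDerivAt_id' s).mul ((hasDerivAt_cos s).const_add 2)).sub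
        ((hasDerivAt_sin s).const_mul 3) |>.congr_deriv (by ring)
    have hmono : StrictMonoOn g (Set.Icc 0 π) := by
      refine strictMonoOn_of_deriv_pos (convex_Icc 0 π)
        (fun s _ ↦ (hg s).continuousAt.continuousWithinAt) fun s hs ↦ ?_
      rw [interior_Icc] at hs
      rw [(hg s).deriv]
      linarith [mul_sin_lt_two_sub_two_mul_cos hs.1 hs.2]
    have := hmono ⟨le_rfl, pi_pos.le⟩ ⟨ht.le, htπ⟩ ht
    simp only [g, zero_mul, sin_zero, mul_zero, sub_zero] at this
    linarith
  · nlinarith [sin_le_one t, neg_one_le_cos t, pi_gt_three]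

lemma sqrt_one_add_sin_two_mul {u : ℝ} (h : 0 ≤ cos u + sin u) :
    √(1 + sin (2 * u)) = cos u + sin u := by
  rw [sin_two_mul, show 1 + 2 * sin u * cos u = (cos u + sin u) ^ 2 by
    linear_combination -sin_sq_add_cos_sq u]
  exact sqrt_sq h

lemma sqrt_one_sub_sin_two_mul {u : ℝ} (h : 0 ≤ cos u - sin u) :
    √(1 - sin (2 * u)) = cos u - sin u := by
  rw [sin_two_mul, show 1 - 2 * sin u * cos u = (cos u - sin u) ^ 2 by
    linear_combination -sin_sq_add_cos_sq u]
  exact sqrt_sq h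

end Real

theorem stmt_0 (x : ℝ) (hx : 0 < x) (hx1 : x < 1) :
    Real.arcsin x > 6 * (Real.sqrt (1 + x) - Real.sqrt (1 - x)) /
      (4 + Real.sqrt (1 + x) + Real.sqrt (1 - x)) := by
  obtain ⟨u, hu⟩ : ∃ u, arcsin x = 2 * u := ⟨arcsin x / 2, by ring⟩
  have hu0 : 0 < u := by linarith [arcsin_pos.2 hx]
  have hu1 : u ≤ π / 4 := by linarith [arcsin_le_pi_div_two x]
  have hx_eq : x = sin (2 * u) := by rw [← hu, sin_arcsin (by linarith) hx1.le]
  have hsin : 0 < sin u := sin_pos_of_pos_of_lt_pi hu0 (by linarith [pi_pos])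
  have hsin_le_cos : sin u ≤ cos u := by
    rw [← cos_pi_div_two_sub]
    exact cos_le_cos_of_nonneg_of_le_pi hu0.le (by linarith [pi_pos]) (by linarith)
  rw [hu, hx_eq, sqrt_one_add_sin_two_mul (by linarith), sqrt_one_sub_sin_two_mul (by linarith),
    gt_iff_lt, div_lt_iff₀ (by linarith [neg_one_le_cos u])]
  linarith [three_mul_sin_lt_mul_two_add_cos hu0]
end

section
/- For all x with 0 < x < 1, 6(√(1+x) − √(1−x)) / (4 + √(1+x) + √(1−x)) > 3x / (2 + √(1−x²)). -/
/-!
With `a = √(1 + x)` and `b = √(1 - x)` we have `a² + b² = 2`, `x = (a² - b²) / 2` and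
`√(1 - x²) = a b`, and after clearing denominators the difference of the two sides is
`(3/2) (a - b) (2 - (a + b))² > 0`.
-/

section

variable {a b : ℝ}

lemma add_lt_two_of_sq_add_sq_eq_two (hab : b < a) (h : a ^ 2 + b ^ 2 = 2) : a + b < 2 := by
  nlinarith [sq_pos_of_pos (sub_pos.mpr hab)]

lemma div_lt_div_of_sq_add_sq_eq_two (hb : 0 ≤ b) (hab : b < a) (h : a ^ 2 + b ^ 2 = 2) :
    3 * ((a ^ 2 - b ^ 2) / 2) / (2 + a * b) < 6 * (a - b) / (4 + a + b) := by
  have ha : 0 < a := hb.trans_lt hab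
  have hgap : 0 < (a - b) * (2 - (a + b)) ^ 2 :=
    mul_pos (sub_pos.mpr hab) (pow_pos (sub_pos.mpr (add_lt_two_of_sq_add_sq_eq_two hab h)) 2)
  rw [div_lt_div_iff₀ (by positivity) (by positivity)]
  have key : 6 * (a - b) * (2 + a * b) - 3 * ((a ^ 2 - b ^ 2) / 2) * (4 + a + b) =
      3 / 2 * ((a - b) * (2 - (a + b)) ^ 2) + 3 * (a - b) * (2 - (a ^ 2 + b ^ 2)) := by
    ring
  rw [h, sub_self, mul_zero, add_zero] at key
  linarith

end

theorem stmt_1 (x : ℝ) (hx : 0 < x) (hx1 : x < 1) :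
    6 * (Real.sqrt (1 + x) - Real.sqrt (1 - x)) /
      (4 + Real.sqrt (1 + x) + Real.sqrt (1 - x)) >
    3 * x / (2 + Real.sqrt (1 - x ^ 2)) := by
  have hplus : 0 ≤ 1 + x := by linarith
  have hminus : 0 ≤ 1 - x := by linarith
  have hprod : Real.sqrt (1 - x ^ 2) = Real.sqrt (1 + x) * Real.sqrt (1 - x) := by
    rw [← Real.sqrt_mul hplus]
    ring_nf
  have hlt : Real.sqrt (1 - x) < Real.sqrt (1 + x) := Real.sqrt_lt_sqrt hminus (by linarith)
  have hsq : Real.sqrt (1 + x) ^ 2 + Real.sqrt (1 - x) ^ 2 = 2 := by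
    rw [Real.sq_sqrt hplus, Real.sq_sqrt hminus]
    ring
  have hx_eq : x = (Real.sqrt (1 + x) ^ 2 - Real.sqrt (1 - x) ^ 2) / 2 := by
    rw [Real.sq_sqrt hplus, Real.sq_sqrt hminus]
    ring
  rw [gt_iff_lt, hprod]
  nth_rewrite 1 [hx_eq]
  exact div_lt_div_of_sq_add_sq_eq_two (Real.sqrt_nonneg _) hlt hsq
end

section
/- For all x with 0 ≤ x ≤ 1, 3x / (2 + √(1−x²)) ≤ arcsin x ≤ πx / (2 + √(1−x²)). -/
/-!
Put `θ = arcsin x`, so that `x = sin θ` and `√(1 - x²) = cos θ`; the claim becomes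
`3 sin θ ≤ θ (2 + cos θ) ≤ π sin θ` on `[0, π/2]`. For the left inequality, the difference
`θ (2 + cos θ) - 3 sin θ` vanishes to second order at `0` and its second derivative
`sin θ - θ cos θ` is nonnegative (this is `θ ≤ tan θ`). For the right one,
`π sin θ - θ (2 + cos θ)` vanishes at `0` and `π/2` and is concave in between, its second
derivative being at most `(3 - π) sin θ`.
-/

open Real Set

lemma le_of_hasDerivAt_nonneg_on_Icc {f f' : ℝ → ℝ} {a b x : ℝ}
    (hf : ∀ y, HasDerivAt f (f' y) y) (hf' : ∀ y ∈ Ioo a b, 0 ≤ f' y) (hx : x ∈ Icc a b) :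
    f a ≤ f x := by
  have hmono : MonotoneOn f (Icc a b) :=
    monotoneOn_of_hasDerivWithinAt_nonneg (convex_Icc a b)
      (fun y _ ↦ (hf y).continuousAt.continuousWithinAt)
      (fun y _ ↦ (hf y).hasDerivWithinAt) (by simpa only [interior_Icc] using hf')
  exact hmono (left_mem_Icc.2 (hx.1.trans hx.2)) hx hx.1

namespace Real

lemma mul_cos_le_sin {θ : ℝ} (h₀ : 0 ≤ θ) (hπ : θ ≤ π) : θ * cos θ ≤ sin θ := by
  rcases le_or_gt (cos θ) 0 with hcos | hcos
  · exact (mul_nonpos_of_nonneg_of_nonpos h₀ hcos).trans (sin_nonneg_of_nonneg_of_le_pi h₀ hπ)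
  · have hθ : θ < π / 2 := by
      by_contra! h
      exact hcos.not_ge (cos_nonpos_of_pi_div_two_le_of_le h (by linarith))
    have := le_tan h₀ hθ
    rwa [tan_eq_sin_div_cos, le_div_iff₀ hcos] at this

lemma two_mul_cos_add_mul_sin_le_two {θ : ℝ} (h₀ : 0 ≤ θ) (hπ : θ ≤ π) :
    2 * cos θ + θ * sin θ ≤ 2 := by
  have hderiv (y : ℝ) :
      HasDerivAt (fun t ↦ 2 - 2 * cos t - t * sin t) (sin y - y * cos y) y :=
    ((((hasDerivAt_cos y).const_mul 2).const_sub 2).fun_sub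
      ((hasDerivAt_id' y).fun_mul (hasDerivAt_sin y))).congr_deriv (by ring)
  have := le_of_hasDerivAt_nonneg_on_Icc hderiv
    (fun y hy ↦ sub_nonneg.2 (mul_cos_le_sin hy.1.le hy.2.le)) ⟨h₀, hπ⟩
  simp only [cos_zero, sin_zero] at this
  linarith

lemma three_mul_sin_le_mul_two_add_cos {θ : ℝ} (h₀ : 0 ≤ θ) (hπ : θ ≤ π) :
    3 * sin θ ≤ θ * (2 + cos θ) := by
  have hderiv (y : ℝ) :
      HasDerivAt (fun t ↦ t * (2 + cos t) - 3 * sin t) (2 - 2 * cos y - y * sin y) y :=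
    (((hasDerivAt_id' y).fun_mul ((hasDerivAt_cos y).const_add 2)).fun_sub
      ((hasDerivAt_sin y).const_mul 3)).congr_deriv (by ring)
  have := le_of_hasDerivAt_nonneg_on_Icc hderiv
    (fun y hy ↦ by linarith [two_mul_cos_add_mul_sin_le_two hy.1.le hy.2.le]) ⟨h₀, hπ⟩
  simp only [cos_zero, sin_zero] at this
  linarith

lemma mul_two_add_cos_le_pi_mul_sin {θ : ℝ} (h₀ : 0 ≤ θ) (hπ : θ ≤ π / 2) :
    θ * (2 + cos θ) ≤ π * sin θ := by
  have hconcave : ConcaveOn ℝ (Icc 0 (π / 2)) (fun t ↦ π * sin t - t * (2 + cos t)) := by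
    refine concaveOn_of_hasDerivWithinAt2_nonpos (convex_Icc _ _)
      (f' := fun t ↦ π * cos t - (2 + cos t) + t * sin t)
      (f'' := fun t ↦ (2 - π) * sin t + t * cos t) (by fun_prop)
      (fun y _ ↦ HasDerivAt.hasDerivWithinAt ?_) (fun y _ ↦ HasDerivAt.hasDerivWithinAt ?_) ?_
    · exact (((hasDerivAt_sin y).const_mul π).fun_sub
        ((hasDerivAt_id' y).fun_mul ((hasDerivAt_cos y).const_add 2))).congr_deriv (by ring)
    · exact ((((hasDerivAt_cos y).const_mul π).fun_sub ((hasDerivAt_cos y).const_add 2)).fun_add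
        ((hasDerivAt_id' y).fun_mul (hasDerivAt_sin y))).congr_deriv (by ring)
    · rw [interior_Icc]
      intro y ⟨hy₀, hy⟩
      have hyπ : y ≤ π := by linarith [pi_pos]
      have hsin := sin_nonneg_of_nonneg_of_le_pi hy₀.le hyπ
      have := mul_cos_le_sin hy₀.le hyπ
      nlinarith [pi_gt_three]
  have hθ : θ ∈ segment ℝ 0 (π / 2) := by
    rw [segment_eq_Icc (by positivity)]
    exact ⟨h₀, hπ⟩
  have := hconcave.ge_on_segment (left_mem_Icc.2 (by positivity))
    (right_mem_Icc.2 (by positivity)) hθ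
  norm_num [sin_pi_div_two, cos_pi_div_two] at this
  linarith

end Real

theorem stmt_2 (x : ℝ) (hx : 0 ≤ x) (hx1 : x ≤ 1) :
    3 * x / (2 + Real.sqrt (1 - x ^ 2)) ≤ Real.arcsin x ∧
    Real.arcsin x ≤ Real.pi * x / (2 + Real.sqrt (1 - x ^ 2)) := by
  have h₀ : 0 ≤ arcsin x := arcsin_nonneg.2 hx
  have hπ : arcsin x ≤ π / 2 := arcsin_le_pi_div_two x
  have hsin : sin (arcsin x) = x := sin_arcsin (by linarith) hx1
  have hpos : 0 < 2 + √(1 - x ^ 2) := by positivity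
  rw [div_le_iff₀ hpos, le_div_iff₀ hpos, ← cos_arcsin]
  constructor
  · simpa only [hsin] using three_mul_sin_le_mul_two_add_cos h₀ (hπ.trans (by linarith [pi_pos]))
  · simpa only [hsin] using mul_two_add_cos_le_pi_mul_sin h₀ hπ
end

section
/- For all x with 0 ≤ x ≤ 1, arcsin x ≤ (πx/(π−2)) / (2/(π−2) + √(1−x²)). -/
/-!
Put `t = arcsin x`; the claim becomes `0 ≤ F t` on `[0, π/2]` for
`F t = π sin t - 2t - (π - 2) t cos t`, which vanishes at both endpoints. Along the chain
`F, F', F'' / cos, (F'' / cos)'` the first three functions vanish at `0`, and the last one,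
`(π - 4) / cos² t + (π - 2)`, is decreasing. Going back down the chain, each function stays
nonpositive from the first point where it is nonpositive (once `f` is nonpositive at `s > 0`,
the mean value theorem on `[0, s]` puts a nonpositive value of `f'` before `s`). If `F` were
negative somewhere, `F` would therefore decrease from there on, contradicting `F (π/2) = 0`.
-/

open Real Set

def StaysNonposOn (f : ℝ → ℝ) (s : Set ℝ) : Prop :=
  ∀ ⦃x⦄, x ∈ s → ∀ ⦃y⦄, y ∈ s → x ≤ y → f x ≤ 0 → f y ≤ 0

namespace StaysNonposOn

variable {f f' c : ℝ → ℝ} {s t : Set ℝ} {a b : ℝ}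

theorem mono (hf : StaysNonposOn f s) (hts : t ⊆ s) : StaysNonposOn f t :=
  fun _ hx _ hy hxy => hf (hts hx) (hts hy) hxy

theorem _root_.AntitoneOn.staysNonposOn (hf : AntitoneOn f s) : StaysNonposOn f s :=
  fun _ hx _ hy hxy hfx => (hf hx hy hxy).trans hfx

theorem pos_mul (hf : StaysNonposOn f s) (hc : ∀ x ∈ s, 0 < c x) :
    StaysNonposOn (fun x => c x * f x) s := by
  intro x hx y hy hxy hcfx
  have hfx : f x ≤ 0 := nonpos_of_mul_nonpos_right hcfx (hc x hx)
  exact mul_nonpos_of_nonneg_of_nonpos (hc y hy).le (hf hx hy hxy hfx)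

theorem antitoneOn_of_hasDerivAt (hf' : StaysNonposOn f' (Ioo a b)) (hfa : f a = 0)
    (hf : ContinuousOn f (Icc a b)) (hderiv : ∀ x ∈ Ioo a b, HasDerivAt f (f' x) x)
    {x : ℝ} (hx : x ∈ Ioc a b) (hfx : f x ≤ 0) : AntitoneOn f (Icc x b) := by
  obtain ⟨η, hη, hslope⟩ := exists_hasDerivAt_eq_slope f f' hx.1
    (hf.mono (Icc_subset_Icc_right hx.2))
    (fun y hy => hderiv y ⟨hy.1, hy.2.trans_le hx.2⟩)
  have hf'η : f' η ≤ 0 := by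
    rw [hslope, hfa, sub_zero]
    exact div_nonpos_of_nonpos_of_nonneg hfx (sub_nonneg.2 hx.1.le)
  have hsub : Ioo x b ⊆ Ioo a b := Ioo_subset_Ioo_left hx.1.le
  refine antitoneOn_of_hasDerivWithinAt_nonpos (f' := f') (convex_Icc x b)
    (hf.mono (Icc_subset_Icc_left hx.1.le)) (fun y hy => ?_) (fun y hy => ?_)
  · rw [interior_Icc] at hy ⊢
    exact (hderiv y (hsub hy)).hasDerivWithinAt
  · rw [interior_Icc] at hy
    exact hf' ⟨hη.1, hη.2.trans_le hx.2⟩ (hsub hy) (hη.2.trans hy.1).le hf'η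

theorem of_hasDerivAt (hf' : StaysNonposOn f' (Ioo a b)) (hfa : f a = 0)
    (hf : ContinuousOn f (Ico a b)) (hderiv : ∀ x ∈ Ioo a b, HasDerivAt f (f' x) x) :
    StaysNonposOn f (Ioo a b) := by
  intro x hx y hy hxy hfx
  have hanti := (hf'.mono (Ioo_subset_Ioo_right hy.2.le)).antitoneOn_of_hasDerivAt hfa
    (hf.mono (Icc_subset_Ico_right hy.2)) (fun z hz => hderiv z ⟨hz.1, hz.2.trans hy.2⟩)
    ⟨hx.1, hxy⟩ hfx
  exact (hanti ⟨le_rfl, hxy⟩ ⟨hxy, le_rfl⟩ hxy).trans hfx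

end StaysNonposOn

namespace Malesevic

noncomputable def defect (t : ℝ) : ℝ := π * sin t - 2 * t - (π - 2) * t * cos t

noncomputable def defectDeriv (t : ℝ) : ℝ := 2 * cos t - 2 + (π - 2) * t * sin t

noncomputable def defectDeriv2DivCos (t : ℝ) : ℝ := (π - 4) * tan t + (π - 2) * t

theorem hasDerivAt_defect (t : ℝ) : HasDerivAt defect (defectDeriv t) t := by
  have := (((hasDerivAt_sin t).const_mul π).sub ((hasDerivAt_id t).const_mul 2)).sub
    (((hasDerivAt_id t).const_mul (π - 2)).mul (hasDerivAt_cos t))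
  refine this.congr_deriv ?_
  simp only [defectDeriv, id]
  ring

theorem hasDerivAt_defectDeriv {t : ℝ} (ht : cos t ≠ 0) :
    HasDerivAt defectDeriv (cos t * defectDeriv2DivCos t) t := by
  have := (((hasDerivAt_cos t).const_mul 2).sub_const 2).add
    (((hasDerivAt_id t).const_mul (π - 2)).mul (hasDerivAt_sin t))
  refine this.congr_deriv ?_
  simp only [defectDeriv2DivCos, id, tan_eq_sin_div_cos]
  field_simp
  ring

theorem hasDerivAt_defectDeriv2DivCos {t : ℝ} (ht : cos t ≠ 0) :
    HasDerivAt defectDeriv2DivCos ((π - 4) / cos t ^ 2 + (π - 2)) t := by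
  have := ((hasDerivAt_tan ht).const_mul (π - 4)).add ((hasDerivAt_id t).const_mul (π - 2))
  exact this.congr_deriv (by ring)

theorem continuous_defectDeriv : Continuous defectDeriv := by
  unfold defectDeriv
  fun_prop

theorem cos_pos_of_mem_Ico {t : ℝ} (ht : t ∈ Ico 0 (π / 2)) : 0 < cos t :=
  cos_pos_of_mem_Ioo ⟨by linarith [pi_pos, ht.1], ht.2⟩

theorem antitoneOn_deriv_defectDeriv2DivCos :
    AntitoneOn (fun t => (π - 4) / cos t ^ 2 + (π - 2)) (Ico 0 (π / 2)) := by
  intro s hs t ht hst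
  have hcos : cos t ≤ cos s := cos_le_cos_of_nonneg_of_le_pi hs.1 (by linarith [pi_pos, ht.2]) hst
  have hsq : cos t ^ 2 ≤ cos s ^ 2 := pow_le_pow_left₀ (cos_pos_of_mem_Ico ht).le hcos 2
  have := div_le_div_of_nonneg_left (sub_nonneg.2 pi_lt_four.le)
    (pow_pos (cos_pos_of_mem_Ico ht) 2) hsq
  simp only [← neg_sub 4 π, neg_div]
  linarith

theorem staysNonposOn_defectDeriv2DivCos :
    StaysNonposOn defectDeriv2DivCos (Ioo 0 (π / 2)) :=
  (antitoneOn_deriv_defectDeriv2DivCos.staysNonposOn.mono Ioo_subset_Ico_self).of_hasDerivAt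
    (by simp [defectDeriv2DivCos])
    (fun t ht => (hasDerivAt_defectDeriv2DivCos (cos_pos_of_mem_Ico ht).ne').continuousAt
      |>.continuousWithinAt)
    (fun t ht => hasDerivAt_defectDeriv2DivCos (cos_pos_of_mem_Ico (Ioo_subset_Ico_self ht)).ne')

theorem staysNonposOn_defectDeriv : StaysNonposOn defectDeriv (Ioo 0 (π / 2)) :=
  (staysNonposOn_defectDeriv2DivCos.pos_mul
      (fun t ht => cos_pos_of_mem_Ico (Ioo_subset_Ico_self ht))).of_hasDerivAt
    (by simp [defectDeriv])
    continuous_defectDeriv.continuousOn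
    (fun t ht => hasDerivAt_defectDeriv (cos_pos_of_mem_Ico (Ioo_subset_Ico_self ht)).ne')

theorem defect_nonneg {t : ℝ} (ht₀ : 0 ≤ t) (ht : t ≤ π / 2) : 0 ≤ defect t := by
  rcases ht₀.eq_or_lt with rfl | ht₀
  · simp [defect]
  by_contra! hneg
  have hanti := staysNonposOn_defectDeriv.antitoneOn_of_hasDerivAt (by simp [defect])
    (fun s _ => (hasDerivAt_defect s).continuousAt.continuousWithinAt)
    (fun s _ => hasDerivAt_defect s) ⟨ht₀, ht⟩ hneg.le
  have hend : defect (π / 2) = 0 := by simp only [defect, sin_pi_div_two, cos_pi_div_two]; ring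
  linarith [hanti ⟨le_rfl, ht⟩ ⟨ht, le_rfl⟩ ht]

theorem le_pi_mul_sin_div {t : ℝ} (ht₀ : 0 ≤ t) (ht : t ≤ π / 2) :
    t ≤ π * sin t / (2 + (π - 2) * cos t) := by
  have hπ : 2 < π := by linarith [pi_gt_three]
  have hcos : 0 ≤ cos t := cos_nonneg_of_mem_Icc ⟨by linarith, ht⟩
  have := defect_nonneg ht₀ ht
  rw [defect] at this
  rw [le_div_iff₀ (by nlinarith)]
  linarith

end Malesevic

theorem stmt_3 (x : ℝ) (hx : 0 ≤ x) (hx1 : x ≤ 1) :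
    Real.arcsin x ≤ (Real.pi * x / (Real.pi - 2)) /
      (2 / (Real.pi - 2) + Real.sqrt (1 - x ^ 2)) := by
  have hπ : π - 2 ≠ 0 := by linarith [pi_gt_three]
  have hrhs : (π * x / (π - 2)) / (2 / (π - 2) + √(1 - x ^ 2))
      = π * sin (arcsin x) / (2 + (π - 2) * cos (arcsin x)) := by
    rw [sin_arcsin (by linarith) hx1, cos_arcsin, div_add' _ _ _ hπ,
      div_div_div_cancel_right₀ hπ]
    ring
  rw [hrhs]
  exact Malesevic.le_pi_mul_sin_div (arcsin_nonneg.2 hx) (arcsin_le_pi_div_two x)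
end

section
/- For all x with 0 ≤ x ≤ 1, π(4−π)x / (2/(π−2) + √(1−x²)) ≤ arcsin x. -/
/-!
Put `θ = arcsin x ∈ [0, π/2]`, so that the claim becomes
`π(4 - π) sin θ ≤ θ (2/(π - 2) + cos θ)`. Bounding `sin θ` above by its Taylor polynomial of
degree 5 and `cos θ` below by that of degree 6 (both obtained by integrating the elementary
bounds repeatedly from `0`), dividing by `θ` and writing `u = θ² ≤ π²/4` leaves a cubic
inequality in `u`, which holds with room to spare for six-digit bounds on `π`.
-/

open Real Set

lemma le_of_hasDerivAt_le_of_nonneg {f g f' g' : ℝ → ℝ} (hf : ∀ t, HasDerivAt f (f' t) t)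
    (hg : ∀ t, HasDerivAt g (g' t) t) (h₀ : f 0 ≤ g 0) (h' : ∀ t, 0 ≤ t → f' t ≤ g' t)
    {x : ℝ} (hx : 0 ≤ x) : f x ≤ g x := by
  have hmono : MonotoneOn (g - f) (Ici 0) :=
    monotoneOn_of_hasDerivWithinAt_nonneg (convex_Ici 0)
      (fun t _ ↦ ((hg t).sub (hf t)).continuousAt.continuousWithinAt)
      (fun t _ ↦ ((hg t).sub (hf t)).hasDerivWithinAt)
      (fun t ht ↦ sub_nonneg.2 <| h' t <| interior_subset (s := Ici 0) ht)
  have := hmono self_mem_Ici hx hx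
  simp only [Pi.sub_apply] at this
  linarith

namespace Real

lemma cos_le_one_sub_sq_div_two_add_pow_four_div (x : ℝ) :
    cos x ≤ 1 - x ^ 2 / 2 + x ^ 4 / 24 := by
  suffices h : ∀ y, 0 ≤ y → cos y ≤ 1 - y ^ 2 / 2 + y ^ 4 / 24 by
    simpa [Even.pow_abs (n := 2) (by decide), Even.pow_abs (n := 4) (by decide)]
      using h |x| (abs_nonneg x)
  refine fun y hy ↦ le_of_hasDerivAt_le_of_nonneg (f' := fun t ↦ -sin t)
    (g := fun t ↦ 1 - t ^ 2 / 2 + t ^ 4 / 24)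
    (g' := fun t ↦ -t + t ^ 3 / 6) hasDerivAt_cos (fun t ↦ ?_) (by norm_num)
    (fun t ht ↦ by linarith [sin_ge_sub_cube ht]) hy
  exact (((hasDerivAt_const t 1).sub ((hasDerivAt_pow 2 t).div_const 2)).add
    ((hasDerivAt_pow 4 t).div_const 24)).congr_deriv (by ring)

lemma sin_le_sub_cube_add_pow_five_div {x : ℝ} (hx : 0 ≤ x) :
    sin x ≤ x - x ^ 3 / 6 + x ^ 5 / 120 :=
  le_of_hasDerivAt_le_of_nonneg (g' := fun t ↦ 1 - t ^ 2 / 2 + t ^ 4 / 24) hasDerivAt_sin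
    (fun t ↦ (((hasDerivAt_id t).sub ((hasDerivAt_pow 3 t).div_const 6)).add
      ((hasDerivAt_pow 5 t).div_const 120)).congr_deriv (by ring))
    (by norm_num) (fun t _ ↦ cos_le_one_sub_sq_div_two_add_pow_four_div t) hx

lemma one_sub_sq_div_two_add_pow_four_div_sub_pow_six_div_le_cos (x : ℝ) :
    1 - x ^ 2 / 2 + x ^ 4 / 24 - x ^ 6 / 720 ≤ cos x := by
  suffices h : ∀ y, 0 ≤ y → 1 - y ^ 2 / 2 + y ^ 4 / 24 - y ^ 6 / 720 ≤ cos y by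
    simpa [Even.pow_abs (n := 2) (by decide), Even.pow_abs (n := 4) (by decide),
      Even.pow_abs (n := 6) (by decide)] using h |x| (abs_nonneg x)
  refine fun y hy ↦ le_of_hasDerivAt_le_of_nonneg
    (f := fun t ↦ 1 - t ^ 2 / 2 + t ^ 4 / 24 - t ^ 6 / 720)
    (f' := fun t ↦ -t + t ^ 3 / 6 - t ^ 5 / 120) (fun t ↦ ?_) hasDerivAt_cos (by norm_num)
    (fun t ht ↦ by linarith [sin_le_sub_cube_add_pow_five_div ht]) hy
  exact ((((hasDerivAt_const t 1).sub ((hasDerivAt_pow 2 t).div_const 2)).add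
    ((hasDerivAt_pow 4 t).div_const 24)).sub ((hasDerivAt_pow 6 t).div_const 720)).congr_deriv
    (by ring)

lemma pi_mul_four_sub_pi_mem_Icc : π * (4 - π) ∈ Icc 2.69676 2.69678 := by
  have := pi_gt_d6
  have := pi_lt_d6
  constructor <;> nlinarith

lemma le_two_div_pi_sub_two : 1.75193 ≤ 2 / (π - 2) := by
  have := pi_lt_d6
  rw [le_div_iff₀ (by linarith [pi_gt_three])]
  linarith

-- The cubic `c + 1 - k - (1/2 - k/6) u + (1/24 - k/120) u² - u³/720` stays above `0.018` here.
lemma mul_taylor_le_add_taylor {k c u : ℝ} (hk : k ∈ Icc 2.69676 2.69678) (hc : 1.75193 ≤ c)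
    (hu₀ : 0 ≤ u) (hu : u ≤ 2.468) :
    k * (1 - u / 6 + u ^ 2 / 120) ≤ c + 1 - u / 2 + u ^ 2 / 24 - u ^ 3 / 720 := by
  obtain ⟨hk₁, hk₂⟩ := hk
  nlinarith [mul_nonneg hu₀ (sq_nonneg (u - 1.6)),
    mul_nonneg (sub_nonneg.2 hu) (sq_nonneg (u - 1.6)), mul_nonneg hu₀ (sub_nonneg.2 hk₁),
    mul_nonneg (sq_nonneg u) (sub_nonneg.2 hk₂)]

lemma pi_mul_four_sub_pi_mul_sin_le {θ : ℝ} (h₀ : 0 ≤ θ) (hπ : θ ≤ π / 2) :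
    π * (4 - π) * sin θ ≤ θ * (2 / (π - 2) + cos θ) := by
  have hu : θ ^ 2 ≤ 2.468 := by nlinarith [pi_lt_d6]
  have hpoly := mul_taylor_le_add_taylor pi_mul_four_sub_pi_mem_Icc le_two_div_pi_sub_two
    (sq_nonneg θ) hu
  calc π * (4 - π) * sin θ ≤ π * (4 - π) * (θ - θ ^ 3 / 6 + θ ^ 5 / 120) :=
        mul_le_mul_of_nonneg_left (sin_le_sub_cube_add_pow_five_div h₀)
          (by nlinarith [pi_mul_four_sub_pi_mem_Icc.1])
    _ = θ * (π * (4 - π) * (1 - θ ^ 2 / 6 + (θ ^ 2) ^ 2 / 120)) := by ring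
    _ ≤ θ * (2 / (π - 2) + 1 - θ ^ 2 / 2 + (θ ^ 2) ^ 2 / 24 - (θ ^ 2) ^ 3 / 720) :=
        mul_le_mul_of_nonneg_left hpoly h₀
    _ = θ * (2 / (π - 2) + (1 - θ ^ 2 / 2 + θ ^ 4 / 24 - θ ^ 6 / 720)) := by ring
    _ ≤ θ * (2 / (π - 2) + cos θ) := by
        gcongr
        exact one_sub_sq_div_two_add_pow_four_div_sub_pow_six_div_le_cos θ

end Real

theorem stmt_4 (x : ℝ) (hx : 0 ≤ x) (hx1 : x ≤ 1) :
    Real.pi * (4 - Real.pi) * x / (2 / (Real.pi - 2) + Real.sqrt (1 - x ^ 2)) ≤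
      Real.arcsin x := by
  have hc : 0 < 2 / (π - 2) := div_pos two_pos (by linarith [pi_gt_three])
  rw [div_le_iff₀ (add_pos_of_pos_of_nonneg hc (sqrt_nonneg _))]
  have h := pi_mul_four_sub_pi_mul_sin_le (arcsin_nonneg.2 hx) (arcsin_le_pi_div_two x)
  rwa [sin_arcsin (by linarith) hx1, cos_arcsin] at h
end

section
/- For all x with 0 ≤ x ≤ 1, (π/2)x / (1 + √(1−x²)) ≤ arcsin x. -/
/-!
With `θ = arcsin x` the claim reads `(π/2) sin θ / (1 + cos θ) ≤ θ`, and the left side is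
`(π/2) tan (θ/2)`. Since `tan` is convex on `[0, π/2)` and vanishes at `0`, it lies below its chord
on `[0, π/4]`, i.e. `tan t ≤ (4/π) t`, which at `t = θ/2` is exactly the claim.
-/

open Real Set

theorem convexOn_tan : ConvexOn ℝ (Ico 0 (π / 2)) tan := by
  have hcos : ∀ y ∈ Ico 0 (π / 2), 0 < cos y := fun y hy =>
    cos_pos_of_mem_Ioo ⟨by linarith [hy.1, pi_pos], hy.2⟩
  refine MonotoneOn.convexOn_of_deriv (convex_Ico _ _)
    (fun y hy => (continuousAt_tan.2 (hcos y hy).ne').continuousWithinAt)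
    (fun y hy => (differentiableAt_tan.2 (hcos y (interior_subset hy)).ne').differentiableWithinAt) ?_
  intro a ha b hb hab
  have ha' := interior_subset ha
  have hb' := interior_subset hb
  simp only [deriv_tan]
  have hcos_le : cos b ≤ cos a :=
    cos_le_cos_of_nonneg_of_le_pi ha'.1 (by linarith [hb'.2, pi_pos]) hab
  have hcb := hcos b hb'
  gcongr

theorem ConvexOn.le_div_mul_of_map_zero {f : ℝ → ℝ} {s : Set ℝ} (hf : ConvexOn ℝ s f)
    (h0 : (0 : ℝ) ∈ s) (hf0 : f 0 = 0) {b t : ℝ} (hb : b ∈ s) (ht : 0 ≤ t) (htb : t ≤ b) :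
    f t ≤ f b / b * t := by
  rcases ht.eq_or_lt with rfl | ht
  · simp [hf0]
  have hb0 : 0 < b := ht.trans_le htb
  have key := hf.2 h0 hb (sub_nonneg.2 ((div_le_one hb0).2 htb)) (div_nonneg ht.le hb0.le)
    (sub_add_cancel _ _)
  simp only [smul_eq_mul, mul_zero, zero_add, hf0, div_mul_cancel₀ t hb0.ne'] at key
  linarith [div_mul_comm (f b) b t]

theorem tan_le_four_div_pi_mul {t : ℝ} (ht : 0 ≤ t) (htπ : t ≤ π / 4) : tan t ≤ 4 / π * t := by
  have hmem : π / 4 ∈ Ico 0 (π / 2) := ⟨by positivity, by linarith [pi_pos]⟩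
  have h := convexOn_tan.le_div_mul_of_map_zero ⟨le_rfl, by positivity⟩ tan_zero hmem ht htπ
  rwa [tan_pi_div_four, one_div_div] at h

theorem sin_eq_tan_half_mul_one_add_cos {θ : ℝ} (h : cos (θ / 2) ≠ 0) :
    sin θ = tan (θ / 2) * (1 + cos θ) := by
  conv_lhs => rw [← mul_div_cancel₀ θ (two_ne_zero' ℝ), sin_two_mul]
  conv_rhs => rw [← mul_div_cancel₀ θ (two_ne_zero' ℝ), cos_two_mul, tan_eq_sin_div_cos]
  field_simp
  ring

theorem pi_div_two_mul_sin_div_one_add_cos_le {θ : ℝ} (hθ : 0 ≤ θ) (hθπ : θ ≤ π / 2) :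
    π / 2 * sin θ / (1 + cos θ) ≤ θ := by
  have hcos : cos (θ / 2) ≠ 0 :=
    (cos_pos_of_mem_Ioo ⟨by linarith [pi_pos], by linarith [pi_pos]⟩).ne'
  have hden : 0 < 1 + cos θ := by
    linarith [cos_nonneg_of_mem_Icc ⟨by linarith [pi_pos], hθπ⟩ (x := θ)]
  calc π / 2 * sin θ / (1 + cos θ) = π / 2 * tan (θ / 2) := by
        rw [sin_eq_tan_half_mul_one_add_cos hcos]; field_simp
    _ ≤ π / 2 * (4 / π * (θ / 2)) := by
        gcongr; exact tan_le_four_div_pi_mul (by linarith) (by linarith)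
    _ = θ := by field_simp; ring

theorem stmt_5 (x : ℝ) (hx : 0 ≤ x) (hx1 : x ≤ 1) :
    (Real.pi / 2) * x / (1 + Real.sqrt (1 - x ^ 2)) ≤ Real.arcsin x := by
  have h := pi_div_two_mul_sin_div_one_add_cos_le (arcsin_nonneg.2 hx) (arcsin_le_pi_div_two x)
  rwa [sin_arcsin (by linarith) hx1, cos_arcsin] at h
end

section
/- For every real α with π/2 < α < 2, the function f_α(x) = (α + √(1−x²)) · (arcsin x)/x attains a unique minimum on (0, 1); i.e., there exists a unique x₀ ∈ (0,1) such that f_α(x₀) ≤ f_α(x) for all x ∈ (0,1), with strict inequality for x ≠ x₀. -/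
/-!
Substituting `x = sin θ` turns `f_α` into `G θ = (α + cos θ) θ / sin θ` on `(0, π/2)`.
Its derivative is `H θ / sin² θ`, where `H θ = α (sin θ - θ cos θ) + sin θ cos θ - θ`, and
`H' θ = sin θ · P θ` with `P θ = α θ - 2 sin θ`. Since `P' θ = α - 2 cos θ` changes sign once
(at `arccos (α/2)`, which lies in `(0, π/2)` because `0 < α < 2`), `P` first decreases from
`P 0 = 0` and then increases to `P (π/2) = α π/2 - 2 > 0`; so `P` changes sign once from `-` to `+`.
The same argument, applied to `H` with `H 0 = 0` and `H (π/2) = α - π/2 > 0`, shows that `H`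
changes sign once, at some `θ₀`, from `-` to `+`; hence `G` has its unique minimum at `θ₀`.
-/

open Real Set

def ChangesSignAt (f : ℝ → ℝ) (s : Set ℝ) (c : ℝ) : Prop :=
  ∀ x ∈ s, (x < c → f x < 0) ∧ (c < x → 0 < f x)

section DerivSign

variable {f f' : ℝ → ℝ} {D : Set ℝ} {c : ℝ}

theorem strictAntiOn_inter_Iic_of_changesSignAt_deriv (hD : Convex ℝ D) (hf : ContinuousOn f D)
    (hderiv : ∀ x ∈ interior D, HasDerivAt f (f' x) x) (hsign : ChangesSignAt f' (interior D) c) :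
    StrictAntiOn f (D ∩ Iic c) := by
  refine strictAntiOn_of_hasDerivWithinAt_neg (hD.inter (convex_Iic c)) (hf.mono inter_subset_left)
    (fun x hx ↦ (hderiv x (interior_mono inter_subset_left hx)).hasDerivWithinAt) fun x hx ↦ ?_
  rw [interior_inter, interior_Iic] at hx
  exact (hsign x hx.1).1 hx.2

theorem strictMonoOn_inter_Ici_of_changesSignAt_deriv (hD : Convex ℝ D) (hf : ContinuousOn f D)
    (hderiv : ∀ x ∈ interior D, HasDerivAt f (f' x) x) (hsign : ChangesSignAt f' (interior D) c) :
    StrictMonoOn f (D ∩ Ici c) := by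
  refine strictMonoOn_of_hasDerivWithinAt_pos (hD.inter (convex_Ici c)) (hf.mono inter_subset_left)
    (fun x hx ↦ (hderiv x (interior_mono inter_subset_left hx)).hasDerivWithinAt) fun x hx ↦ ?_
  rw [interior_inter, interior_Ici] at hx
  exact (hsign x hx.1).2 hx.2

theorem lt_of_changesSignAt_deriv (hD : Convex ℝ D) (hf : ContinuousOn f D)
    (hderiv : ∀ x ∈ interior D, HasDerivAt f (f' x) x) (hsign : ChangesSignAt f' (interior D) c)
    (hc : c ∈ D) {x : ℝ} (hx : x ∈ D) (hxc : x ≠ c) : f c < f x := by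
  rcases hxc.lt_or_gt with hlt | hgt
  · exact strictAntiOn_inter_Iic_of_changesSignAt_deriv hD hf hderiv hsign
      ⟨hx, hlt.le⟩ ⟨hc, self_mem_Iic⟩ hlt
  · exact strictMonoOn_inter_Ici_of_changesSignAt_deriv hD hf hderiv hsign
      ⟨hc, self_mem_Ici⟩ ⟨hx, hgt.le⟩ hgt

theorem exists_changesSignAt_of_changesSignAt_deriv {a b : ℝ} (hc : c ∈ Ioo a b)
    (hf : ContinuousOn f (Icc a b)) (hderiv : ∀ x ∈ Ioo a b, HasDerivAt f (f' x) x)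
    (hsign : ChangesSignAt f' (Ioo a b) c) (ha : f a = 0) (hb : 0 < f b) :
    ∃ z ∈ Ioo c b, ChangesSignAt f (Ioo a b) z := by
  rw [← interior_Icc] at hderiv hsign
  have hanti := strictAntiOn_inter_Iic_of_changesSignAt_deriv (convex_Icc a b) hf hderiv hsign
  have hmono := strictMonoOn_inter_Ici_of_changesSignAt_deriv (convex_Icc a b) hf hderiv hsign
  have ha_mem : a ∈ Icc a b ∩ Iic c := ⟨left_mem_Icc.2 (hc.1.trans hc.2).le, hc.1.le⟩
  have hfc : f c < 0 := ha ▸ hanti ha_mem ⟨Ioo_subset_Icc_self hc, self_mem_Iic⟩ hc.1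
  obtain ⟨z, hz, hfz⟩ := intermediate_value_Ioo hc.2.le (hf.mono (Icc_subset_Icc_left hc.1.le))
    ⟨hfc, hb⟩
  have hz_mem : z ∈ Icc a b ∩ Ici c := ⟨⟨hc.1.le.trans hz.1.le, hz.2.le⟩, hz.1.le⟩
  refine ⟨z, hz, fun x hx ↦ ⟨fun hxz ↦ ?_, fun hzx ↦ ?_⟩⟩
  · rcases le_or_gt x c with hxc | hcx
    · exact ha ▸ hanti ha_mem ⟨Ioo_subset_Icc_self hx, hxc⟩ hx.1
    · exact hfz ▸ hmono ⟨Ioo_subset_Icc_self hx, hcx.le⟩ hz_mem hxz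
  · exact hfz ▸ hmono hz_mem ⟨Ioo_subset_Icc_self hx, hz.1.le.trans hzx.le⟩ hzx

end DerivSign

theorem existsUnique_strict_minimizer {β γ : Type*} [Preorder γ] {s : Set β} {g : β → γ}
    (h : ∃ x₀ ∈ s, ∀ x ∈ s, x ≠ x₀ → g x₀ < g x) :
    ∃! x₀, x₀ ∈ s ∧ ∀ x ∈ s, x ≠ x₀ → g x₀ < g x := by
  obtain ⟨x₀, hx₀, hmin⟩ := h
  refine ⟨x₀, ⟨hx₀, hmin⟩, fun y ⟨hy, hymin⟩ ↦ ?_⟩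
  by_contra hne
  exact lt_asymm (hmin y hy hne) (hymin x₀ hx₀ (Ne.symm hne))

namespace ArcsinMin

variable (α : ℝ)

noncomputable def G (θ : ℝ) : ℝ := (α + cos θ) * θ / sin θ

noncomputable def H (θ : ℝ) : ℝ := α * (sin θ - θ * cos θ) + sin θ * cos θ - θ

noncomputable def P (θ : ℝ) : ℝ := α * θ - 2 * sin θ

theorem continuous_P : Continuous (P α) := by
  unfold P; fun_prop

theorem continuous_H : Continuous (H α) := by
  unfold H; fun_prop

theorem hasDerivAt_P (θ : ℝ) : HasDerivAt (P α) (α - 2 * cos θ) θ :=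
  (((hasDerivAt_id θ).const_mul α).sub ((hasDerivAt_sin θ).const_mul 2)).congr_deriv
    (by simp)

theorem hasDerivAt_H (θ : ℝ) : HasDerivAt (H α) (sin θ * P α θ) θ := by
  have h := (((hasDerivAt_sin θ).sub ((hasDerivAt_id θ).mul (hasDerivAt_cos θ))).const_mul α
    |>.add ((hasDerivAt_sin θ).mul (hasDerivAt_cos θ))).sub (hasDerivAt_id θ)
  refine h.congr_deriv ?_
  simp only [P, id]
  linear_combination sin_sq_add_cos_sq θ

theorem hasDerivAt_G {θ : ℝ} (hs : sin θ ≠ 0) : HasDerivAt (G α) (H α θ / sin θ ^ 2) θ := by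
  have h := (((hasDerivAt_cos θ).const_add α).mul (hasDerivAt_id' θ)).div (hasDerivAt_sin θ) hs
  refine h.congr_deriv ?_
  simp only [H, Pi.mul_apply]
  linear_combination -θ * sin_sq_add_cos_sq θ / sin θ ^ 2

variable {α}

theorem exists_changesSignAt_P (h1 : π / 2 < α) (h2 : α < 2) :
    ∃ c ∈ Ioo 0 (π / 2), ChangesSignAt (P α) (Ioo 0 (π / 2)) c := by
  have hπ := pi_gt_three
  have hcos : cos (arccos (α / 2)) = α / 2 := cos_arccos (by linarith) (by linarith)
  have hc : arccos (α / 2) ∈ Ioo 0 (π / 2) :=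
    ⟨arccos_pos.2 (by linarith), arccos_lt_pi_div_two.2 (by linarith)⟩
  have hsign : ChangesSignAt (fun θ ↦ α - 2 * cos θ) (Ioo 0 (π / 2)) (arccos (α / 2)) := by
    intro θ hθ
    have hθ' : θ ∈ Icc 0 π := ⟨hθ.1.le, by linarith [hθ.2]⟩
    have hc' : arccos (α / 2) ∈ Icc 0 π := ⟨hc.1.le, by linarith [hc.2]⟩
    exact ⟨fun h ↦ by linarith [strictAntiOn_cos hθ' hc' h],
      fun h ↦ by linarith [strictAntiOn_cos hc' hθ' h]⟩
  obtain ⟨c, hc_mem, hPc⟩ := exists_changesSignAt_of_changesSignAt_deriv hc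
    (continuous_P α).continuousOn (fun θ _ ↦ hasDerivAt_P α θ) hsign (by simp [P])
    (by simp only [P, sin_pi_div_two]; nlinarith)
  exact ⟨c, ⟨hc.1.trans hc_mem.1, hc_mem.2⟩, hPc⟩

theorem exists_changesSignAt_H (h1 : π / 2 < α) (h2 : α < 2) :
    ∃ θ₀ ∈ Ioo 0 (π / 2), ChangesSignAt (H α) (Ioo 0 (π / 2)) θ₀ := by
  obtain ⟨c, hc, hPc⟩ := exists_changesSignAt_P h1 h2
  have hsign : ChangesSignAt (fun θ ↦ sin θ * P α θ) (Ioo 0 (π / 2)) c := by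
    intro θ hθ
    have hsin : 0 < sin θ := sin_pos_of_pos_of_lt_pi hθ.1 (by linarith [hθ.2, pi_pos])
    exact ⟨fun h ↦ mul_neg_of_pos_of_neg hsin ((hPc θ hθ).1 h),
      fun h ↦ mul_pos hsin ((hPc θ hθ).2 h)⟩
  obtain ⟨θ₀, hθ₀, hHθ₀⟩ := exists_changesSignAt_of_changesSignAt_deriv hc
    (continuous_H α).continuousOn (fun θ _ ↦ hasDerivAt_H α θ) hsign (by simp [H])
    (by simp only [H, sin_pi_div_two, cos_pi_div_two]; linarith)
  exact ⟨θ₀, ⟨hc.1.trans hθ₀.1, hθ₀.2⟩, hHθ₀⟩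

theorem exists_strict_minimizer_G (h1 : π / 2 < α) (h2 : α < 2) :
    ∃ θ₀ ∈ Ioo 0 (π / 2), ∀ θ ∈ Ioo 0 (π / 2), θ ≠ θ₀ → G α θ₀ < G α θ := by
  obtain ⟨θ₀, hθ₀, hHθ₀⟩ := exists_changesSignAt_H h1 h2
  have hsin : ∀ θ ∈ Ioo 0 (π / 2), 0 < sin θ := fun θ hθ ↦
    sin_pos_of_pos_of_lt_pi hθ.1 (by linarith [hθ.2, pi_pos])
  have hderiv : ∀ θ ∈ interior (Ioo 0 (π / 2)), HasDerivAt (G α) (H α θ / sin θ ^ 2) θ :=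
    fun θ hθ ↦ hasDerivAt_G α (hsin θ (interior_subset hθ)).ne'
  have hsign : ChangesSignAt (fun θ ↦ H α θ / sin θ ^ 2) (interior (Ioo 0 (π / 2))) θ₀ := by
    rw [interior_Ioo]
    intro θ hθ
    have hsin2 : 0 < sin θ ^ 2 := pow_pos (hsin θ hθ) 2
    exact ⟨fun h ↦ div_neg_of_neg_of_pos ((hHθ₀ θ hθ).1 h) hsin2,
      fun h ↦ div_pos ((hHθ₀ θ hθ).2 h) hsin2⟩
  have hcont : ContinuousOn (G α) (Ioo 0 (π / 2)) := fun θ hθ ↦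
    (hderiv θ (by rwa [interior_Ioo])).continuousAt.continuousWithinAt
  exact ⟨θ₀, hθ₀, fun θ hθ hne ↦
    lt_of_changesSignAt_deriv (convex_Ioo 0 _) hcont hderiv hsign hθ₀ hθ hne⟩

theorem G_arcsin {x : ℝ} (hx : x ∈ Icc (-1) 1) :
    G α (arcsin x) = (α + √(1 - x ^ 2)) * arcsin x / x := by
  rw [G, cos_arcsin, sin_arcsin hx.1 hx.2]

end ArcsinMin

theorem stmt_8 (α : ℝ) (h1 : Real.pi / 2 < α) (h2 : α < 2) :
    ∃! x₀ : ℝ, x₀ ∈ Set.Ioo (0:ℝ) 1 ∧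
      ∀ x ∈ Set.Ioo (0:ℝ) 1, x ≠ x₀ →
        (α + Real.sqrt (1 - x₀ ^ 2)) * Real.arcsin x₀ / x₀ <
        (α + Real.sqrt (1 - x ^ 2)) * Real.arcsin x / x := by
  obtain ⟨θ₀, hθ₀, hmin⟩ := ArcsinMin.exists_strict_minimizer_G h1 h2
  refine existsUnique_strict_minimizer (g := fun x ↦ (α + √(1 - x ^ 2)) * arcsin x / x) ?_
  have harcsin₀ : arcsin (sin θ₀) = θ₀ := arcsin_sin (by linarith [hθ₀.1, pi_pos]) hθ₀.2.le
  have hIcc : Ioo (0 : ℝ) 1 ⊆ Icc (-1) 1 :=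
    Ioo_subset_Icc_self.trans (Icc_subset_Icc_left (by norm_num))
  have hx₀ : sin θ₀ ∈ Ioo 0 1 :=
    ⟨arcsin_pos.1 (harcsin₀.symm ▸ hθ₀.1), arcsin_lt_pi_div_two.1 (harcsin₀.symm ▸ hθ₀.2)⟩
  refine ⟨sin θ₀, hx₀, fun x hx hne ↦ ?_⟩
  rw [← ArcsinMin.G_arcsin (hIcc hx), ← ArcsinMin.G_arcsin (sin_mem_Icc θ₀), harcsin₀]
  refine hmin _ ⟨arcsin_pos.2 hx.1, arcsin_lt_pi_div_two.2 hx.2⟩ fun h ↦ hne ?_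
  rw [← h, sin_arcsin (hIcc hx).1 (hIcc hx).2]
end

section
/- If 0 < α ≤ π/2, then for all x with 0 ≤ x ≤ 1, (πα/2)x / (α + √(1−x²)) ≤ arcsin x ≤ (α+1)x / (α + √(1−x²)). -/
/-!
Put `x = sin θ` with `θ ∈ [0, π/2]`, so that `√(1 - x²) = cos θ`; the two bounds become
`(π α / 2) sin θ ≤ θ (α + cos θ) ≤ (α + 1) sin θ`.

For the upper bound, `(α + 1) sin θ - θ (α + cos θ)` vanishes at `0` and has derivative
`θ sin θ - α (1 - cos θ)`, which is nonnegative because `θ sin θ ≥ (π/2)(1 - cos θ)`; by the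
half-angle formulas this is `tan u ≤ 4u/π` on `[0, π/4]`, a concavity statement.

For the lower bound it suffices, since `θ cos θ ≥ 0`, to treat `α = π/2`, i.e. to show that
`gap θ = θ (π/2 + cos θ) - (π²/4) sin θ` is nonnegative. It vanishes at `0` and `π/2`; it is
concave on `[0, π/3]`, and on `[π/3, π/2]` its derivative is convex, negative at `π/3` and zero at
`π/2`, hence nonpositive, so `gap` decreases to `gap (π/2) = 0` there.
-/

open Real Set

theorem nonneg_of_deriv2_nonpos_of_nonneg_endpoints {f f' f'' : ℝ → ℝ} {a b x : ℝ}
    (hf : ∀ y, HasDerivAt f (f' y) y) (hf' : ∀ y, HasDerivAt f' (f'' y) y)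
    (hf'' : ∀ y ∈ Ioo a b, f'' y ≤ 0) (ha : 0 ≤ f a) (hb : 0 ≤ f b) (hx : x ∈ Icc a b) :
    0 ≤ f x := by
  have hab : a ≤ b := hx.1.trans hx.2
  have hconcave : ConcaveOn ℝ (Icc a b) f :=
    concaveOn_of_hasDerivWithinAt2_nonpos (convex_Icc a b)
      (HasDerivAt.continuousOn fun y _ => hf y) (fun y _ => (hf y).hasDerivWithinAt)
      (fun y _ => (hf' y).hasDerivWithinAt) (by simpa only [interior_Icc] using hf'')
  calc 0 ≤ min (f a) (f b) := le_min ha hb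
    _ ≤ f x := hconcave.ge_on_segment (left_mem_Icc.2 hab) (right_mem_Icc.2 hab)
      (by rwa [segment_eq_Icc hab])

theorem nonpos_of_deriv2_nonneg_of_nonpos_endpoints {f f' f'' : ℝ → ℝ} {a b x : ℝ}
    (hf : ∀ y, HasDerivAt f (f' y) y) (hf' : ∀ y, HasDerivAt f' (f'' y) y)
    (hf'' : ∀ y ∈ Ioo a b, 0 ≤ f'' y) (ha : f a ≤ 0) (hb : f b ≤ 0) (hx : x ∈ Icc a b) :
    f x ≤ 0 :=
  neg_nonneg.1 <| nonneg_of_deriv2_nonpos_of_nonneg_endpoints (f := -f)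
    (fun y => (hf y).neg) (fun y => (hf' y).neg) (fun y hy => neg_nonpos.2 (hf'' y hy))
    (neg_nonneg.2 ha) (neg_nonneg.2 hb) hx

theorem pi_mul_sin_le_four_mul_mul_cos {u : ℝ} (hu : u ∈ Icc 0 (π / 4)) :
    π * sin u ≤ 4 * u * cos u := by
  have hderiv (t : ℝ) : HasDerivAt (fun t => 4 * t * cos t - π * sin t)
      (4 * cos t - 4 * t * sin t - π * cos t) t :=
    ((((hasDerivAt_id' t).const_mul 4).mul (hasDerivAt_cos t)).sub
      ((hasDerivAt_sin t).const_mul π)).congr_deriv (by ring)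
  have hderiv2 (t : ℝ) : HasDerivAt (fun t => 4 * cos t - 4 * t * sin t - π * cos t)
      ((π - 8) * sin t - 4 * t * cos t) t :=
    ((((hasDerivAt_cos t).const_mul 4).sub (((hasDerivAt_id' t).const_mul 4).mul
      (hasDerivAt_sin t))).sub ((hasDerivAt_cos t).const_mul π)).congr_deriv (by ring)
  have hconcave : ∀ t ∈ Ioo 0 (π / 4), (π - 8) * sin t - 4 * t * cos t ≤ 0 := by
    intro t ht
    have hsin := sin_nonneg_of_nonneg_of_le_pi ht.1.le (by linarith [ht.2, pi_pos])
    have hcos := cos_nonneg_of_mem_Icc (x := t)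
      ⟨by linarith [ht.1, pi_pos], by linarith [ht.2, pi_pos]⟩
    nlinarith [mul_nonneg (by linarith [pi_lt_d2] : (0 : ℝ) ≤ 8 - π) hsin,
      mul_nonneg ht.1.le hcos]
  have hright : 4 * (π / 4) * cos (π / 4) - π * sin (π / 4) = 0 := by
    rw [cos_pi_div_four, sin_pi_div_four]; ring
  exact sub_nonneg.1 (nonneg_of_deriv2_nonpos_of_nonneg_endpoints
    (f := fun t => 4 * t * cos t - π * sin t) hderiv hderiv2 hconcave (by simp) hright.ge hu)

theorem pi_div_two_mul_one_sub_cos_le_mul_sin {θ : ℝ} (hθ : θ ∈ Icc 0 (π / 2)) :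
    π / 2 * (1 - cos θ) ≤ θ * sin θ := by
  have hu : θ / 2 ∈ Icc 0 (π / 4) := ⟨by linarith [hθ.1], by linarith [hθ.2]⟩
  have hsin : 0 ≤ sin (θ / 2) := sin_nonneg_of_nonneg_of_le_pi hu.1 (by linarith [hu.2, pi_pos])
  have hhalf := mul_le_mul_of_nonneg_left (pi_mul_sin_le_four_mul_mul_cos hu) hsin
  have hθ2 : θ = 2 * (θ / 2) := by ring
  rw [hθ2, sin_two_mul, cos_two_mul_eq_one_sub, ← hθ2]
  linarith

theorem mul_add_cos_le_add_one_mul_sin {α θ : ℝ} (hα : α ≤ π / 2) (hθ : θ ∈ Icc 0 (π / 2)) :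
    θ * (α + cos θ) ≤ (α + 1) * sin θ := by
  let h t := (α + 1) * sin t - t * (α + cos t)
  have hderiv (t : ℝ) : HasDerivAt h (t * sin t - α * (1 - cos t)) t :=
    (((hasDerivAt_sin t).const_mul (α + 1)).sub
      ((hasDerivAt_id' t).mul ((hasDerivAt_cos t).const_add α))).congr_deriv (by ring)
  have hmono : MonotoneOn h (Icc 0 (π / 2)) := by
    refine monotoneOn_of_hasDerivWithinAt_nonneg (convex_Icc _ _)
      (HasDerivAt.continuousOn fun t _ => hderiv t) (fun t _ => (hderiv t).hasDerivWithinAt) ?_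
    intro t ht
    rw [interior_Icc] at ht
    have hkey := pi_div_two_mul_one_sub_cos_le_mul_sin (Ioo_subset_Icc_self ht)
    nlinarith [mul_le_mul_of_nonneg_right hα (sub_nonneg.2 (cos_le_one t))]
  have := hmono (left_mem_Icc.2 (by positivity)) hθ hθ.1
  simpa [h] using this

namespace ShaferFink

noncomputable def gap (θ : ℝ) : ℝ := θ * (π / 2 + cos θ) - π ^ 2 / 4 * sin θ

noncomputable def gapDeriv (θ : ℝ) : ℝ := π / 2 + cos θ - θ * sin θ - π ^ 2 / 4 * cos θ

noncomputable def gapDeriv2 (θ : ℝ) : ℝ := (π ^ 2 / 4 - 2) * sin θ - θ * cos θ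

theorem hasDerivAt_gap (θ : ℝ) : HasDerivAt gap (gapDeriv θ) θ :=
  (((hasDerivAt_id' θ).mul ((hasDerivAt_cos θ).const_add (π / 2))).sub
    ((hasDerivAt_sin θ).const_mul (π ^ 2 / 4))).congr_deriv (by rw [gapDeriv]; ring)

theorem hasDerivAt_gapDeriv (θ : ℝ) : HasDerivAt gapDeriv (gapDeriv2 θ) θ :=
  ((((hasDerivAt_cos θ).const_add (π / 2)).sub ((hasDerivAt_id' θ).mul (hasDerivAt_sin θ))).sub
    ((hasDerivAt_cos θ).const_mul (π ^ 2 / 4))).congr_deriv (by rw [gapDeriv2]; ring)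

theorem hasDerivAt_gapDeriv2 (θ : ℝ) :
    HasDerivAt gapDeriv2 ((π ^ 2 / 4 - 3) * cos θ + θ * sin θ) θ :=
  (((hasDerivAt_sin θ).const_mul (π ^ 2 / 4 - 2)).sub
    ((hasDerivAt_id' θ).mul (hasDerivAt_cos θ))).congr_deriv (by ring)

theorem gapDeriv_nonpos {θ : ℝ} (hθ : θ ∈ Icc (π / 3) (π / 2)) : gapDeriv θ ≤ 0 := by
  have hconvex : ∀ t ∈ Ioo (π / 3) (π / 2), 0 ≤ (π ^ 2 / 4 - 3) * cos t + t * sin t := by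
    intro t ht
    have hcos0 := cos_nonneg_of_mem_Icc (x := t) ⟨by linarith [ht.1, pi_pos], ht.2.le⟩
    have hcos : cos t ≤ 1 / 2 := cos_pi_div_three ▸
      cos_le_cos_of_nonneg_of_le_pi (by positivity) (by linarith [ht.2, pi_pos]) ht.1.le
    have hsin : 1 / 2 ≤ sin t := by
      nlinarith [sin_sq_add_cos_sq t, sin_nonneg_of_nonneg_of_le_pi (x := t)
        (by linarith [ht.1, pi_pos]) (by linarith [ht.2, pi_pos])]
    have ht1 : 1 ≤ t := by linarith [ht.1, pi_gt_three]
    have hpi : 3 - π ^ 2 / 4 ≤ 3 / 4 := by nlinarith [pi_gt_three]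
    nlinarith [mul_le_mul_of_nonneg_right hpi hcos0,
      mul_le_mul ht1 hsin (by norm_num) (by linarith)]
  have hsqrt3 : 1.7 ≤ √3 := le_sqrt_of_sq_le (by norm_num)
  have hleft : gapDeriv (π / 3) ≤ 0 := by
    rw [gapDeriv, cos_pi_div_three, sin_pi_div_three]
    nlinarith [pi_gt_d2, mul_le_mul_of_nonneg_left hsqrt3 pi_pos.le]
  have hright : gapDeriv (π / 2) = 0 := by simp [gapDeriv]
  exact nonpos_of_deriv2_nonneg_of_nonpos_endpoints hasDerivAt_gapDeriv hasDerivAt_gapDeriv2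
    hconvex hleft hright.le hθ

theorem gap_nonneg_of_pi_div_three_le {θ : ℝ} (hθ : θ ∈ Icc (π / 3) (π / 2)) : 0 ≤ gap θ := by
  have hanti : AntitoneOn gap (Icc (π / 3) (π / 2)) :=
    antitoneOn_of_hasDerivWithinAt_nonpos (convex_Icc _ _)
      (HasDerivAt.continuousOn fun t _ => hasDerivAt_gap t)
      (fun t _ => (hasDerivAt_gap t).hasDerivWithinAt)
      fun t ht => gapDeriv_nonpos (interior_subset ht)
  have hright : gap (π / 2) = 0 := by
    rw [gap, cos_pi_div_two, sin_pi_div_two]; ring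
  have hle : π / 3 ≤ π / 2 := by linarith [pi_pos]
  exact hright ▸ hanti hθ (right_mem_Icc.2 hle) hθ.2

theorem gap_nonneg {θ : ℝ} (hθ : θ ∈ Icc 0 (π / 2)) : 0 ≤ gap θ := by
  rcases le_or_gt θ (π / 3) with hθ3 | hθ3
  · have hconcave : ∀ t ∈ Ioo 0 (π / 3), gapDeriv2 t ≤ 0 := by
      intro t ht
      rw [gapDeriv2]
      have hsin := sin_nonneg_of_nonneg_of_le_pi ht.1.le (by linarith [ht.2, pi_pos])
      have hcos : 1 / 2 ≤ cos t := cos_pi_div_three ▸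
        cos_le_cos_of_nonneg_of_le_pi ht.1.le (by linarith [pi_pos]) ht.2.le
      have hpi : π ^ 2 / 4 - 2 ≤ 1 / 2 := by nlinarith [pi_lt_d2, pi_pos]
      nlinarith [mul_le_mul_of_nonneg_right hpi hsin, sin_le ht.1.le,
        mul_le_mul_of_nonneg_left hcos ht.1.le]
    have hthird : 0 ≤ gap (π / 3) :=
      gap_nonneg_of_pi_div_three_le ⟨le_rfl, by linarith [pi_pos]⟩
    exact nonneg_of_deriv2_nonpos_of_nonneg_endpoints hasDerivAt_gap hasDerivAt_gapDeriv
      hconcave (by simp [gap]) hthird ⟨hθ.1, hθ3⟩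
  · exact gap_nonneg_of_pi_div_three_le ⟨hθ3.le, hθ.2⟩

end ShaferFink

theorem pi_mul_div_two_mul_sin_le {α θ : ℝ} (hα0 : 0 ≤ α) (hα : α ≤ π / 2)
    (hθ : θ ∈ Icc 0 (π / 2)) :
    π * α / 2 * sin θ ≤ θ * (α + cos θ) := by
  have hcos : 0 ≤ θ * cos θ :=
    mul_nonneg hθ.1 (cos_nonneg_of_mem_Icc ⟨by linarith [hθ.1, pi_pos], hθ.2⟩)
  have h := mul_le_mul_of_nonneg_left (sub_nonneg.1 (ShaferFink.gap_nonneg hθ)) hα0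
  nlinarith [mul_le_mul_of_nonneg_right hα hcos, pi_pos]

theorem stmt_10 (α : ℝ) (hα0 : 0 < α) (hα : α ≤ Real.pi / 2)
    (x : ℝ) (hx : 0 ≤ x) (hx1 : x ≤ 1) :
    (Real.pi * α / 2) * x / (α + Real.sqrt (1 - x ^ 2)) ≤ Real.arcsin x ∧
    Real.arcsin x ≤ (α + 1) * x / (α + Real.sqrt (1 - x ^ 2)) := by
  have hθ : arcsin x ∈ Icc 0 (π / 2) := ⟨arcsin_nonneg.2 hx, arcsin_le_pi_div_two x⟩
  have hden : 0 < α + √(1 - x ^ 2) := add_pos_of_pos_of_nonneg hα0 (sqrt_nonneg _)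
  have hsin : sin (arcsin x) = x := sin_arcsin (by linarith) hx1
  constructor
  · rw [div_le_iff₀ hden, ← cos_arcsin]
    have h := pi_mul_div_two_mul_sin_le hα0.le hα hθ
    rwa [hsin] at h
  · rw [le_div_iff₀ hden, ← cos_arcsin]
    have h := mul_add_cos_le_add_one_mul_sin hα hθ
    rwa [hsin] at h
end

section
/- If α ≥ 2, then for all t with 0 ≤ t ≤ π/2, (α+1)·sin t / (α + cos t) ≤ t ≤ (πα/2)·sin t / (α + cos t). -/
/-!
After clearing the positive denominator `α + cos t`, each bound says that a function vanishing
at `0` is nonnegative. For the lower bound, `f x = x (α + cos x) - (α + 1) sin x` has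
`f' x = 2 sin (x/2) (α sin (x/2) - x cos (x/2)) ≥ 0`, since `(x/2) cos (x/2) ≤ sin (x/2)`
and `α ≥ 2`. For the upper bound, `g x = (π α / 2) sin x - x (α + cos x)` also vanishes at
`π / 2`, and `g'' x = (2 - π α / 2) sin x + x cos x ≤ (3 - π α / 2) sin x ≤ 0`, so `g` is
concave and hence nonnegative between these two zeros.
-/

open Real Set

theorem Real.mul_cos_le_sin_s12 {x : ℝ} (h0 : 0 ≤ x) (hπ : x ≤ π) : x * cos x ≤ sin x := by
  rcases lt_or_ge x (π / 2) with hx | hx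
  · have hcos : 0 < cos x := cos_pos_of_mem_Ioo ⟨by linarith [pi_pos], hx⟩
    have := le_tan h0 hx
    rwa [tan_eq_sin_div_cos, le_div_iff₀ hcos] at this
  · have : cos x ≤ 0 := cos_nonpos_of_pi_div_two_le_of_le hx (by linarith [pi_pos])
    nlinarith [sin_nonneg_of_nonneg_of_le_pi h0 hπ]

theorem Real.mul_sin_le_mul_one_sub_cos {α x : ℝ} (hα : 2 ≤ α) (h0 : 0 ≤ x)
    (h2π : x ≤ 2 * π) : x * sin x ≤ α * (1 - cos x) := by
  obtain ⟨y, rfl⟩ : ∃ y, x = 2 * y := ⟨x / 2, by ring⟩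
  have hy := mul_cos_le_sin_s12 (x := y) (by linarith) (by linarith)
  have hs := sin_nonneg_of_nonneg_of_le_pi (x := y) (by linarith) (by linarith)
  rw [sin_two_mul, cos_two_mul, cos_sq']
  nlinarith [mul_le_mul_of_nonneg_left hy hs]

theorem hasDerivAt_mul_add_cos_sub_mul_sin (α x : ℝ) :
    HasDerivAt (fun x => x * (α + cos x) - (α + 1) * sin x)
      (α * (1 - cos x) - x * sin x) x :=
  (((hasDerivAt_id x).mul ((hasDerivAt_cos x).const_add α)).sub
    ((hasDerivAt_sin x).const_mul (α + 1))).congr_deriv (by simp only [id]; ring)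

theorem monotoneOn_mul_add_cos_sub_mul_sin {α : ℝ} (hα : 2 ≤ α) :
    MonotoneOn (fun x => x * (α + cos x) - (α + 1) * sin x) (Icc 0 (2 * π)) :=
  monotoneOn_of_hasDerivWithinAt_nonneg (convex_Icc _ _) (by fun_prop)
    (fun x _ => (hasDerivAt_mul_add_cos_sub_mul_sin α x).hasDerivWithinAt)
    (fun x hx => by
      rw [interior_Icc] at hx
      linarith [mul_sin_le_mul_one_sub_cos hα hx.1.le hx.2.le])

theorem hasDerivAt_mul_sin_sub_mul_add_cos (c α x : ℝ) :
    HasDerivAt (fun x => c * sin x - x * (α + cos x))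
      (c * cos x - (α + cos x) + x * sin x) x :=
  (((hasDerivAt_sin x).const_mul c).sub
    ((hasDerivAt_id x).mul ((hasDerivAt_cos x).const_add α))).congr_deriv (by simp only [id]; ring)

theorem hasDerivAt_mul_cos_sub_add_cos_add_mul_sin (c α x : ℝ) :
    HasDerivAt (fun x => c * cos x - (α + cos x) + x * sin x)
      ((2 - c) * sin x + x * cos x) x :=
  ((((hasDerivAt_cos x).const_mul c).sub ((hasDerivAt_cos x).const_add α)).add
    ((hasDerivAt_id x).mul (hasDerivAt_sin x))).congr_deriv (by simp only [id]; ring)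

theorem concaveOn_mul_sin_sub_mul_add_cos {c : ℝ} (hc : 3 ≤ c) (α : ℝ) :
    ConcaveOn ℝ (Icc 0 π) (fun x => c * sin x - x * (α + cos x)) :=
  concaveOn_of_hasDerivWithinAt2_nonpos (convex_Icc _ _) (by fun_prop)
    (fun x _ => (hasDerivAt_mul_sin_sub_mul_add_cos c α x).hasDerivWithinAt)
    (fun x _ => (hasDerivAt_mul_cos_sub_add_cos_add_mul_sin c α x).hasDerivWithinAt)
    (fun x hx => by
      rw [interior_Icc] at hx
      nlinarith [mul_cos_le_sin_s12 hx.1.le hx.2.le, sin_nonneg_of_nonneg_of_le_pi hx.1.le hx.2.le])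

theorem Real.add_one_mul_sin_div_add_cos_le {α t : ℝ} (hα : 2 ≤ α) (h0 : 0 ≤ t)
    (h2π : t ≤ 2 * π) : (α + 1) * sin t / (α + cos t) ≤ t := by
  have hpos : 0 < α + cos t := by linarith [neg_one_le_cos t]
  have := monotoneOn_mul_add_cos_sub_mul_sin hα ⟨le_rfl, by positivity⟩ ⟨h0, h2π⟩ h0
  simp only [zero_mul, sin_zero, mul_zero, sub_zero] at this
  rw [div_le_iff₀ hpos]
  linarith

theorem Real.le_pi_mul_div_two_mul_sin_div_add_cos {α t : ℝ} (hα : 2 ≤ α) (h0 : 0 ≤ t)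
    (ht : t ≤ π / 2) : t ≤ (π * α / 2) * sin t / (α + cos t) := by
  have hpos : 0 < α + cos t := by linarith [neg_one_le_cos t]
  have hc : 3 ≤ π * α / 2 := by nlinarith [pi_gt_three]
  have hseg : t ∈ segment ℝ 0 (π / 2) := by
    rw [segment_eq_Icc (by positivity)]; exact ⟨h0, ht⟩
  have := (concaveOn_mul_sin_sub_mul_add_cos hc α).ge_on_segment
    ⟨le_rfl, pi_nonneg⟩ ⟨by positivity, by linarith [pi_pos]⟩ hseg
  simp only [sin_zero, cos_zero, sin_pi_div_two, cos_pi_div_two, mul_zero, zero_mul, sub_zero,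
    add_zero, mul_one] at this
  rw [show π * α / 2 - π / 2 * α = 0 by ring, min_self] at this
  rw [le_div_iff₀ hpos]
  linarith

theorem stmt_12 (α : ℝ) (hα : 2 ≤ α) (t : ℝ) (ht : 0 ≤ t) (ht1 : t ≤ Real.pi / 2) :
    (α + 1) * Real.sin t / (α + Real.cos t) ≤ t ∧
    t ≤ (Real.pi * α / 2) * Real.sin t / (α + Real.cos t) :=
  ⟨add_one_mul_sin_div_add_cos_le hα ht (by linarith [pi_pos]),
    le_pi_mul_div_two_mul_sin_div_add_cos hα ht ht1⟩
end

section
/- If 0 < α ≤ π/2, then for all t with 0 ≤ t ≤ π/2, (πα/2)·sin t / (α + cos t) ≤ t ≤ (α+1)·sin t / (α + cos t). -/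
/-!
Clearing the denominator, both inequalities are affine in `α`. Since `sin t ≤ t` and, by
Jordan's inequality, `t ≤ π / 2 * sin t`, the extreme case is `α = π / 2`, where they read
`t * (π / 2 + cos t) ≤ (π / 2 + 1) * sin t` and `π ^ 2 / 4 * sin t ≤ t * (π / 2 + cos t)`.
Differentiating these differences repeatedly leads to functions of the monotone form
`c * cos t - t * sin t`; the sign information is then carried back up the chain of derivatives
by the mean value theorem, using that each function vanishes at one end of `[0, π / 2]`.
-/

open Real Set

/-- On an interval: `g` is first nonnegative, then nonpositive. -/
def NonposAfterNegOn (g : ℝ → ℝ) (s : Set ℝ) : Prop :=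
  ∀ ⦃x⦄, x ∈ s → ∀ ⦃y⦄, y ∈ s → x ≤ y → g x < 0 → g y ≤ 0

theorem AntitoneOn.nonposAfterNegOn {g : ℝ → ℝ} {s : Set ℝ} (hg : AntitoneOn g s) :
    NonposAfterNegOn g s :=
  fun _ hx _ hy hxy hneg => (hg hx hy hxy).trans hneg.le

section Derivative

variable {f f' g : ℝ → ℝ} {a b : ℝ}

theorem antitoneOn_Icc_of_hasDerivAt_nonpos (hf : ∀ x ∈ Icc a b, HasDerivAt f (f' x) x)
    (hf' : ∀ x ∈ Ioo a b, f' x ≤ 0) : AntitoneOn f (Icc a b) :=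
  antitoneOn_of_hasDerivWithinAt_nonpos (convex_Icc a b)
    (fun x hx => (hf x hx).continuousAt.continuousWithinAt)
    (fun x hx => by
      rw [interior_Icc] at hx ⊢
      exact (hf x (Ioo_subset_Icc_self hx)).hasDerivWithinAt)
    (by rwa [interior_Icc])

theorem monotoneOn_Icc_of_hasDerivAt_nonneg (hf : ∀ x ∈ Icc a b, HasDerivAt f (f' x) x)
    (hf' : ∀ x ∈ Ioo a b, 0 ≤ f' x) : MonotoneOn f (Icc a b) :=
  monotoneOn_of_hasDerivWithinAt_nonneg (convex_Icc a b)
    (fun x hx => (hf x hx).continuousAt.continuousWithinAt)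
    (fun x hx => by
      rw [interior_Icc] at hx ⊢
      exact (hf x (Ioo_subset_Icc_self hx)).hasDerivWithinAt)
    (by rwa [interior_Icc])

theorem antitoneOn_Icc_of_neg_of_nonposAfterNegOn_deriv
    (hf : ∀ x ∈ Icc a b, HasDerivAt f (f' x) x) (ha : 0 ≤ f a)
    (hf' : NonposAfterNegOn f' (Icc a b)) {x : ℝ} (hx : x ∈ Icc a b) (hneg : f x < 0) :
    AntitoneOn f (Icc x b) := by
  have hax : a < x := hx.1.lt_of_ne (by rintro rfl; linarith)
  obtain ⟨ξ, hξ, hslope⟩ := exists_hasDerivAt_eq_slope f f' hax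
    (fun y hy => (hf y ⟨hy.1, hy.2.trans hx.2⟩).continuousAt.continuousWithinAt)
    (fun y hy => hf y ⟨hy.1.le, hy.2.le.trans hx.2⟩)
  have hξneg : f' ξ < 0 := by
    rw [hslope]
    exact div_neg_of_neg_of_pos (by linarith) (by linarith)
  refine antitoneOn_Icc_of_hasDerivAt_nonpos (fun y hy => hf y ⟨hx.1.trans hy.1, hy.2⟩) ?_
  intro y hy
  exact hf' ⟨hξ.1.le, hξ.2.le.trans hx.2⟩ ⟨(hax.trans hy.1).le, hy.2.le⟩
    (hξ.2.trans hy.1).le hξneg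

theorem NonposAfterNegOn.of_hasDerivAt_of_nonneg_left
    (hf : ∀ x ∈ Icc a b, HasDerivAt f (f' x) x) (ha : 0 ≤ f a)
    (hf' : NonposAfterNegOn f' (Icc a b)) : NonposAfterNegOn f (Icc a b) :=
  fun _ hx _ hy hxy hneg =>
    ((antitoneOn_Icc_of_neg_of_nonposAfterNegOn_deriv hf ha hf' hx hneg)
      (left_mem_Icc.2 (hxy.trans hy.2)) ⟨hxy, hy.2⟩ hxy).trans hneg.le

theorem NonposAfterNegOn.of_hasDerivAt_of_nonpos_right
    (hf : ∀ x ∈ Icc a b, HasDerivAt f (-g x) x) (hb : f b ≤ 0)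
    (hg : NonposAfterNegOn g (Icc a b)) : NonposAfterNegOn f (Icc a b) := by
  intro x hx y hy hxy hneg
  by_contra! hpos
  have hyb : y < b := hy.2.lt_of_ne (by rintro rfl; linarith)
  obtain ⟨ξ, hξ, hslope⟩ := exists_hasDerivAt_eq_slope f (fun z => -g z) hyb
    (fun z hz => (hf z ⟨hy.1.trans hz.1, hz.2⟩).continuousAt.continuousWithinAt)
    (fun z hz => hf z ⟨hy.1.trans hz.1.le, hz.2.le⟩)
  have hξpos : 0 < g ξ := by
    rw [← neg_neg (g ξ), hslope, neg_pos]
    exact div_neg_of_neg_of_pos (by linarith) (by linarith)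
  have hanti : AntitoneOn f (Icc a ξ) := by
    refine antitoneOn_Icc_of_hasDerivAt_nonpos (fun z hz => hf z ⟨hz.1, hz.2.trans hξ.2.le⟩) ?_
    intro z hz
    by_contra! hgz
    exact (hg ⟨hz.1.le, (hz.2.trans hξ.2).le⟩ ⟨(hy.1.trans hξ.1.le), hξ.2.le⟩ hz.2.le
      (by linarith)).not_gt hξpos
  have := hanti ⟨hx.1, hxy.trans hξ.1.le⟩ ⟨hx.1.trans hxy, hξ.1.le⟩ hxy
  linarith

theorem nonneg_of_hasDerivAt_of_nonposAfterNegOn (hf : ∀ x ∈ Icc a b, HasDerivAt f (f' x) x)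
    (ha : 0 ≤ f a) (hb : 0 ≤ f b) (hf' : NonposAfterNegOn f' (Icc a b)) :
    ∀ x ∈ Icc a b, 0 ≤ f x := by
  intro x hx
  by_contra! hneg
  have := antitoneOn_Icc_of_neg_of_nonposAfterNegOn_deriv hf ha hf' hx hneg
    (left_mem_Icc.2 hx.2) (right_mem_Icc.2 hx.2) hx.2
  linarith

end Derivative

theorem Real.antitoneOn_mul_cos_sub_mul_sin {c : ℝ} (hc : 0 ≤ c) :
    AntitoneOn (fun t => c * cos t - t * sin t) (Icc 0 (π / 2)) := by
  intro x hx y hy hxy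
  have hcos : cos y ≤ cos x :=
    antitoneOn_cos ⟨hx.1, hx.2.trans (by linarith [pi_pos])⟩
      ⟨hy.1, hy.2.trans (by linarith [pi_pos])⟩ hxy
  have hsin : sin x ≤ sin y :=
    monotoneOn_sin ⟨by linarith [hx.1, pi_pos], hx.2⟩ ⟨by linarith [hy.1, pi_pos], hy.2⟩ hxy
  have hsin_nonneg : 0 ≤ sin x := sin_nonneg_of_nonneg_of_le_pi hx.1 (by linarith [hx.2, pi_pos])
  have := mul_le_mul hxy hsin hsin_nonneg hy.1
  have := mul_le_mul_of_nonneg_left hcos hc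
  dsimp only
  linarith

theorem Real.mul_pi_div_two_add_cos_le_mul_sin {t : ℝ} (ht : t ∈ Icc 0 (π / 2)) :
    t * (π / 2 + cos t) ≤ (π / 2 + 1) * sin t := by
  have d2 (t : ℝ) : HasDerivAt (fun t => (1 - π / 2) * sin t + t * cos t)
      ((2 - π / 2) * cos t - t * sin t) t :=
    (((hasDerivAt_sin t).const_mul _).add
      ((hasDerivAt_id' t).mul (hasDerivAt_cos t))).congr_deriv (by ring)
  have d1 (t : ℝ) : HasDerivAt (fun t => π / 2 * cos t - π / 2 + t * sin t)
      ((1 - π / 2) * sin t + t * cos t) t :=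
    ((((hasDerivAt_cos t).const_mul _).sub_const _).add
      ((hasDerivAt_id' t).mul (hasDerivAt_sin t))).congr_deriv (by ring)
  have d0 (t : ℝ) : HasDerivAt (fun t => (π / 2 + 1) * sin t - t * (π / 2 + cos t))
      (π / 2 * cos t - π / 2 + t * sin t) t :=
    (((hasDerivAt_sin t).const_mul _).sub
      ((hasDerivAt_id' t).mul ((hasDerivAt_cos t).const_add _))).congr_deriv (by ring)
  have h2 : NonposAfterNegOn (fun t => (1 - π / 2) * sin t + t * cos t) (Icc 0 (π / 2)) :=
    .of_hasDerivAt_of_nonneg_left (fun t _ => d2 t) (by simp)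
      (antitoneOn_mul_cos_sub_mul_sin (by linarith [pi_lt_four])).nonposAfterNegOn
  have h1 : ∀ t ∈ Icc 0 (π / 2), 0 ≤ π / 2 * cos t - π / 2 + t * sin t :=
    nonneg_of_hasDerivAt_of_nonposAfterNegOn (fun t _ => d1 t) (by simp) (by simp) h2
  have h0 := monotoneOn_Icc_of_hasDerivAt_nonneg (fun t _ => d0 t)
    (fun t ht => h1 t (Ioo_subset_Icc_self ht)) (left_mem_Icc.2 pi_div_two_pos.le) ht ht.1
  simp only [sin_zero, cos_zero, mul_zero, zero_mul, sub_zero] at h0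
  linarith

theorem Real.pi_sq_div_four_mul_sin_le_mul_pi_div_two_add_cos {t : ℝ}
    (ht : t ∈ Icc 0 (π / 2)) :
    π ^ 2 / 4 * sin t ≤ t * (π / 2 + cos t) := by
  have d2 (t : ℝ) : HasDerivAt (fun t => t * cos t - (π ^ 2 / 4 - 2) * sin t)
      ((3 - π ^ 2 / 4) * cos t - t * sin t) t :=
    (((hasDerivAt_id' t).mul (hasDerivAt_cos t)).sub
      ((hasDerivAt_sin t).const_mul _)).congr_deriv (by ring)
  have d1 (t : ℝ) : HasDerivAt (fun t => π / 2 + cos t - t * sin t - π ^ 2 / 4 * cos t)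
      (-(t * cos t - (π ^ 2 / 4 - 2) * sin t)) t :=
    ((((hasDerivAt_cos t).const_add _).sub
      ((hasDerivAt_id' t).mul (hasDerivAt_sin t))).sub
      ((hasDerivAt_cos t).const_mul _)).congr_deriv (by ring)
  have d0 (t : ℝ) : HasDerivAt (fun t => t * (π / 2 + cos t) - π ^ 2 / 4 * sin t)
      (π / 2 + cos t - t * sin t - π ^ 2 / 4 * cos t) t :=
    (((hasDerivAt_id' t).mul ((hasDerivAt_cos t).const_add _)).sub
      ((hasDerivAt_sin t).const_mul _)).congr_deriv (by ring)
  have h2 : NonposAfterNegOn (fun t => t * cos t - (π ^ 2 / 4 - 2) * sin t) (Icc 0 (π / 2)) :=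
    .of_hasDerivAt_of_nonneg_left (fun t _ => d2 t) (by simp)
      (antitoneOn_mul_cos_sub_mul_sin (by nlinarith [pi_lt_d2, pi_pos])).nonposAfterNegOn
  have h1 : NonposAfterNegOn (fun t => π / 2 + cos t - t * sin t - π ^ 2 / 4 * cos t)
      (Icc 0 (π / 2)) :=
    .of_hasDerivAt_of_nonpos_right (fun t _ => d1 t) (by simp) h2
  have h0 := nonneg_of_hasDerivAt_of_nonposAfterNegOn (fun t _ => d0 t) (by simp)
    (le_of_eq (by simp; ring)) h1 t ht
  linarith

theorem stmt_13 (α : ℝ) (hα0 : 0 < α) (hα : α ≤ Real.pi / 2)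
    (t : ℝ) (ht : 0 ≤ t) (ht1 : t ≤ Real.pi / 2) :
    (Real.pi * α / 2) * Real.sin t / (α + Real.cos t) ≤ t ∧
    t ≤ (α + 1) * Real.sin t / (α + Real.cos t) := by
  have hden : 0 < α + cos t := by linarith [cos_nonneg_of_mem_Icc ⟨by linarith, ht1⟩]
  have hjordan : t ≤ π / 2 * sin t := by
    have := mul_le_sin ht ht1
    rw [div_mul_eq_mul_div, div_le_iff₀ pi_pos] at this
    linarith
  have hsin : sin t ≤ t := sin_le ht
  have hlower := pi_sq_div_four_mul_sin_le_mul_pi_div_two_add_cos ⟨ht, ht1⟩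
  have hupper := mul_pi_div_two_add_cos_le_mul_sin ⟨ht, ht1⟩
  constructor
  · rw [div_le_iff₀ hden]
    nlinarith [mul_le_mul_of_nonneg_right hα (sub_nonneg.2 hjordan)]
  · rw [le_div_iff₀ hden]
    nlinarith [mul_le_mul_of_nonneg_right hα (sub_nonneg.2 hsin)]
end

section
/- If π/2 < α < 2, then for all t with 0 ≤ t ≤ π/2, 4(1 − 1/α²)·sin t / (α + cos t) ≤ t ≤ max{πα/2, α+1}·sin t / (α + cos t). -/
/-!
Put `h t = sin t / (α + cos t)`, so that `h' t = g (cos t)` with `g c = (α c + 1) / (α + c) ^ 2`.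

Lower bound: `α² (α + c)² - 4 (α² - 1) (α c + 1) = (α c - α² + 2)²`, so
`g ≤ α² / (4 (α² - 1))`, and integrating from `0` gives `h t ≤ α² t / (4 (α² - 1))`.

Upper bound: `g` increases on `[0, c*]`, `c* = α - 2/α`, and `g c ≥ g 1 = 1 / (α + 1)` on
`[c*, 1]`. With `s = arccos c*` and `M = max (π α / 2) (α + 1)`, the function `M h t - t` is
therefore monotone on `[0, s]` and concave on `[s, π/2]`. It vanishes at `0` and is nonnegative
at `π/2` because `M ≥ π α / 2`, hence it is nonnegative on `[0, π/2]`.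
-/

open Real Set

theorem nonneg_of_monotoneOn_of_concaveOn {φ : ℝ → ℝ} {a s b x : ℝ} (ha : 0 ≤ φ a)
    (hb : 0 ≤ φ b) (has : a ≤ s) (hmono : MonotoneOn φ (Icc a s))
    (hconc : ConcaveOn ℝ (Icc s b) φ)
    (hx : x ∈ Icc a b) : 0 ≤ φ x := by
  have hs : 0 ≤ φ s := ha.trans (hmono (left_mem_Icc.2 has) (right_mem_Icc.2 has) has)
  rcases le_total x s with hxs | hsx
  · exact ha.trans (hmono (left_mem_Icc.2 has) ⟨hx.1, hxs⟩ hx.1)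
  · have hsb : s ≤ b := hsx.trans hx.2
    exact (le_min hs hb).trans
      (hconc.min_le_of_mem_Icc (left_mem_Icc.2 hsb) (right_mem_Icc.2 hsb) ⟨hsx, hx.2⟩)

section

variable {α : ℝ}

theorem add_cos_pos (hα : 1 < α) (t : ℝ) : 0 < α + cos t := by
  linarith [neg_one_le_cos t]

theorem hasDerivAt_sin_div_add_cos (hα : 1 < α) (t : ℝ) :
    HasDerivAt (fun t => sin t / (α + cos t)) ((α * cos t + 1) / (α + cos t) ^ 2) t := by
  refine ((hasDerivAt_sin t).div ((hasDerivAt_cos t).const_add α)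
    (add_cos_pos hα t).ne').congr_deriv ?_
  rw [← sin_sq_add_cos_sq t]
  ring

theorem mul_add_one_div_add_sq_le (hα : 1 < α) {c : ℝ} (hc : 0 < α + c) :
    (α * c + 1) / (α + c) ^ 2 ≤ α ^ 2 / (4 * (α ^ 2 - 1)) := by
  rw [div_le_div_iff₀ (by positivity) (by nlinarith)]
  nlinarith [sq_nonneg (α * c - α ^ 2 + 2)]

theorem one_div_add_one_le_mul_add_one_div_add_sq (hα : 1 < α) {c : ℝ}
    (hc : α ^ 2 - α - 1 ≤ c) (hc1 : c ≤ 1) :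
    1 / (α + 1) ≤ (α * c + 1) / (α + c) ^ 2 := by
  have hpos : 0 < α + c := by nlinarith
  rw [div_le_div_iff₀ (by linarith) (by positivity)]
  nlinarith [mul_nonneg (sub_nonneg.2 hc1) (sub_nonneg.2 hc)]

theorem monotoneOn_mul_add_one_div_add_sq (hα : 0 < α) :
    MonotoneOn (fun c => (α * c + 1) / (α + c) ^ 2) (Icc 0 (α - 2 / α)) := by
  rintro c ⟨hc0, hc⟩ d ⟨hd0, hd⟩ hcd
  dsimp only
  rw [div_le_div_iff₀ (by positivity) (by positivity)]
  set e := α - 2 / α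
  have hcrit : α * e = α ^ 2 - 2 := by simp only [e]; field_simp
  have hcd' : c * d ≤ e ^ 2 := by nlinarith
  have hfactor : (α * d + 1) * (α + c) ^ 2 - (α * c + 1) * (α + d) ^ 2
      = (d - c) * (α ^ 3 - 2 * α - α * c * d - c - d) := by ring
  have hcubic : 0 ≤ α ^ 3 - 2 * α - α * c * d - c - d := by nlinarith
  nlinarith [mul_nonneg (sub_nonneg.2 hcd) hcubic]

theorem four_mul_one_sub_one_div_sq_mul_sin_div_add_cos_le (hα : 1 < α) {t : ℝ} (ht : 0 ≤ t) :
    4 * (1 - 1 / α ^ 2) * (sin t / (α + cos t)) ≤ t := by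
  have hderiv := hasDerivAt_sin_div_add_cos hα
  have hslope := image_sub_le_mul_sub_of_deriv_le (fun x => (hderiv x).differentiableAt)
    (fun x => (hderiv x).deriv ▸ mul_add_one_div_add_sq_le hα (add_cos_pos hα x)) ht
  simp only [sin_zero, zero_div, sub_zero] at hslope
  have hα2 : 1 < α ^ 2 := by nlinarith
  calc 4 * (1 - 1 / α ^ 2) * (sin t / (α + cos t))
      ≤ 4 * (1 - 1 / α ^ 2) * (α ^ 2 / (4 * (α ^ 2 - 1)) * t) := by
        gcongr
        have := (div_le_one (by positivity : (0:ℝ) < α ^ 2)).2 hα2.le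
        linarith
    _ = t := by
        have : α ^ 2 - 1 ≠ 0 := by linarith
        field_simp

theorem hasDerivAt_mul_sin_div_add_cos_sub (hα : 1 < α) (M t : ℝ) :
    HasDerivAt (fun t => M * (sin t / (α + cos t)) - t)
      (M * ((α * cos t + 1) / (α + cos t) ^ 2) - 1) t :=
  ((hasDerivAt_sin_div_add_cos hα t).const_mul M).sub (hasDerivAt_id' t)

theorem monotoneOn_mul_sin_div_add_cos_sub (hα : 1 < α) (hα2 : α ≤ 2) {M s : ℝ}
    (hM : α + 1 ≤ M) (hs : s ≤ π) (hcos : cos s = α - 2 / α) :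
    MonotoneOn (fun t => M * (sin t / (α + cos t)) - t) (Icc 0 s) := by
  have hderiv := hasDerivAt_mul_sin_div_add_cos_sub hα M
  refine monotoneOn_of_deriv_nonneg (convex_Icc 0 s)
    (HasDerivAt.continuousOn fun t _ => hderiv t)
    (fun t _ => (hderiv t).differentiableAt.differentiableWithinAt) fun t ht => ?_
  rw [interior_Icc] at ht
  rw [(hderiv t).deriv, sub_nonneg]
  have hcos_t : α - 2 / α ≤ cos t := hcos ▸ cos_le_cos_of_nonneg_of_le_pi ht.1.le hs ht.2.le
  have hcrit : α ^ 2 - α - 1 ≤ α - 2 / α := by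
    rw [le_sub_iff_add_le, ← le_sub_iff_add_le', div_le_iff₀ (by linarith)]
    nlinarith [mul_nonneg (sub_nonneg.2 hα2)
      (mul_nonneg (by linarith : (0:ℝ) ≤ α - 1) (by linarith : (0:ℝ) ≤ α + 1))]
  calc 1 ≤ M * (1 / (α + 1)) := by
        rw [mul_one_div, le_div_iff₀ (by linarith), one_mul]
        exact hM
    _ ≤ M * ((α * cos t + 1) / (α + cos t) ^ 2) := mul_le_mul_of_nonneg_left
        (one_div_add_one_le_mul_add_one_div_add_sq hα (hcrit.trans hcos_t) (cos_le_one t))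
        (by linarith)

theorem concaveOn_mul_sin_div_add_cos_sub (hα : 1 < α) {M s : ℝ} (hM : 0 ≤ M) (hs : 0 ≤ s)
    (hcos : cos s = α - 2 / α) :
    ConcaveOn ℝ (Icc s (π / 2)) (fun t => M * (sin t / (α + cos t)) - t) := by
  have hderiv := hasDerivAt_mul_sin_div_add_cos_sub hα M
  refine AntitoneOn.concaveOn_of_deriv (convex_Icc s (π / 2))
    (HasDerivAt.continuousOn fun t _ => hderiv t)
    (fun t _ => (hderiv t).differentiableAt.differentiableWithinAt) ?_
  rw [interior_Icc]
  intro x hx y hy hxy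
  simp only [(hderiv _).deriv]
  have hpi : π / 2 ≤ π := by linarith [pi_pos]
  have hcos_mem {t : ℝ} (ht : t ∈ Ioo s (π / 2)) : cos t ∈ Icc 0 (α - 2 / α) :=
    ⟨cos_nonneg_of_mem_Icc ⟨by linarith [pi_pos, ht.1], ht.2.le⟩,
      hcos ▸ cos_le_cos_of_nonneg_of_le_pi hs (ht.2.le.trans hpi) ht.1.le⟩
  refine sub_le_sub_right (mul_le_mul_of_nonneg_left ?_ hM) 1
  exact monotoneOn_mul_add_one_div_add_sq (by linarith) (hcos_mem hy) (hcos_mem hx)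
    (cos_le_cos_of_nonneg_of_le_pi (hs.trans hx.1.le) (hy.2.le.trans hpi) hxy)

theorem le_max_mul_sin_div_add_cos (hα : √2 ≤ α) (hα2 : α ≤ 2) {t : ℝ}
    (ht : t ∈ Icc 0 (π / 2)) :
    t ≤ max (π * α / 2) (α + 1) * (sin t / (α + cos t)) := by
  obtain ⟨hα0, hsq⟩ := sqrt_le_iff.1 hα
  have hα1 : 1 < α := by nlinarith
  have hcrit_nonneg : 0 ≤ α - 2 / α := by
    rw [sub_nonneg, div_le_iff₀ (by linarith)]
    nlinarith
  have hcos : cos (arccos (α - 2 / α)) = α - 2 / α := by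
    refine cos_arccos (by linarith) ?_
    rw [sub_le_iff_le_add, ← sub_le_iff_le_add', le_div_iff₀ (by linarith)]
    nlinarith
  set M := max (π * α / 2) (α + 1)
  have hright : 0 ≤ M * (sin (π / 2) / (α + cos (π / 2))) - π / 2 := by
    rw [sin_pi_div_two, cos_pi_div_two, add_zero, sub_nonneg, mul_one_div,
      le_div_iff₀ (by linarith)]
    linarith [le_max_left (π * α / 2) (α + 1)]
  have := nonneg_of_monotoneOn_of_concaveOn (φ := fun t => M * (sin t / (α + cos t)) - t)
    (by simp) hright (arccos_nonneg _)
    (monotoneOn_mul_sin_div_add_cos_sub hα1 hα2 (le_max_right _ _) (arccos_le_pi _) hcos)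
    (concaveOn_mul_sin_div_add_cos_sub hα1
      ((by linarith : (0:ℝ) ≤ α + 1).trans (le_max_right _ _)) (arccos_nonneg _) hcos) ht
  linarith

end

theorem stmt_14 (α : ℝ) (h1 : Real.pi / 2 < α) (h2 : α < 2)
    (t : ℝ) (ht : 0 ≤ t) (ht1 : t ≤ Real.pi / 2) :
    4 * (1 - 1 / α ^ 2) * Real.sin t / (α + Real.cos t) ≤ t ∧
    t ≤ max (Real.pi * α / 2) (α + 1) * Real.sin t / (α + Real.cos t) := by
  have hα : √2 ≤ α := sqrt_le_iff.2 ⟨by linarith [pi_pos], by nlinarith [pi_gt_three]⟩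
  rw [mul_div_assoc, mul_div_assoc]
  exact ⟨four_mul_one_sub_one_div_sq_mul_sin_div_add_cos_le (by linarith [pi_gt_three]) ht,
    le_max_mul_sin_div_add_cos hα h2.le ⟨ht, ht1⟩⟩
end

section
/- For every real α ≤ 0, the function f_α(x) = (α + √(1−x²)) · (arcsin x)/x is strictly decreasing on (0, 1). -/
/-!
Split `f_α(x) = α · (arcsin x)/x + √(1 - x²) · (arcsin x)/x`. With `x = sin t`, `t ∈ (0, π/2)`,
the first quotient is `t / sin t`, increasing because `t < tan t`, so its multiple by `α ≤ 0` is
antitone; the second is `t / tan t`, strictly decreasing because `sin t cos t < t`.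
-/

open Real Set

lemma strictMonoOn_Ioo_of_hasDerivAt_pos {a b : ℝ} {f f' : ℝ → ℝ}
    (hf : ∀ x ∈ Ioo a b, HasDerivAt f (f' x) x) (hf' : ∀ x ∈ Ioo a b, 0 < f' x) :
    StrictMonoOn f (Ioo a b) := by
  refine strictMonoOn_of_hasDerivWithinAt_pos (convex_Ioo a b)
    (fun x hx => (hf x hx).continuousAt.continuousWithinAt) (fun x hx => ?_) (by simpa using hf')
  rw [interior_Ioo] at hx ⊢
  exact (hf x hx).hasDerivWithinAt

lemma strictAntiOn_Ioo_of_hasDerivAt_neg {a b : ℝ} {f f' : ℝ → ℝ}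
    (hf : ∀ x ∈ Ioo a b, HasDerivAt f (f' x) x) (hf' : ∀ x ∈ Ioo a b, f' x < 0) :
    StrictAntiOn f (Ioo a b) := by
  refine strictAntiOn_of_hasDerivWithinAt_neg (convex_Ioo a b)
    (fun x hx => (hf x hx).continuousAt.continuousWithinAt) (fun x hx => ?_) (by simpa using hf')
  rw [interior_Ioo] at hx ⊢
  exact (hf x hx).hasDerivWithinAt

lemma hasDerivAt_sqrt_one_sub_sq {x : ℝ} (hx : x ^ 2 < 1) :
    HasDerivAt (fun y : ℝ => √(1 - y ^ 2)) (-(x / √(1 - x ^ 2))) x := by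
  have h := ((hasDerivAt_pow 2 x).const_sub 1).sqrt (sub_pos.2 hx).ne'
  convert h using 1
  field_simp
  ring

lemma arcsin_mul_sqrt_one_sub_sq_lt {x : ℝ} (hx₀ : 0 < x) (hx₁ : x < 1) :
    arcsin x * √(1 - x ^ 2) < x := by
  have hs : 0 < √(1 - x ^ 2) := sqrt_pos.2 (by nlinarith)
  have h := lt_tan (arcsin_pos.2 hx₀) (arcsin_lt_pi_div_two.2 hx₁)
  rwa [tan_arcsin, lt_div_iff₀ hs] at h

lemma mul_sqrt_one_sub_sq_lt_arcsin {x : ℝ} (hx₀ : 0 < x) (hx₁ : x < 1) :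
    x * √(1 - x ^ 2) < arcsin x := by
  have hs : √(1 - x ^ 2) < 1 := by
    rw [sqrt_lt' one_pos]
    nlinarith
  have h := sin_lt (arcsin_pos.2 hx₀)
  rw [sin_arcsin (by linarith) hx₁.le] at h
  nlinarith

lemma strictMonoOn_arcsin_div : StrictMonoOn (fun x => arcsin x / x) (Ioo 0 1) := by
  refine strictMonoOn_Ioo_of_hasDerivAt_pos (f' := fun x => (x / √(1 - x ^ 2) - arcsin x) / x ^ 2)
    (fun x ⟨hx₀, hx₁⟩ => ?_) (fun x ⟨hx₀, hx₁⟩ => ?_)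
  · refine ((hasDerivAt_arcsin (by linarith) hx₁.ne).div (hasDerivAt_id x) hx₀.ne').congr_deriv ?_
    simp only [id_eq]
    field_simp
  · have hs : 0 < √(1 - x ^ 2) := sqrt_pos.2 (by nlinarith)
    have h : arcsin x < x / √(1 - x ^ 2) :=
      (lt_div_iff₀ hs).2 (arcsin_mul_sqrt_one_sub_sq_lt hx₀ hx₁)
    have : 0 < x / √(1 - x ^ 2) - arcsin x := sub_pos.2 h
    positivity

lemma strictAntiOn_sqrt_one_sub_sq_mul_arcsin_div :
    StrictAntiOn (fun x => √(1 - x ^ 2) * arcsin x / x) (Ioo 0 1) := by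
  refine strictAntiOn_Ioo_of_hasDerivAt_neg (f' := fun x => (x - arcsin x / √(1 - x ^ 2)) / x ^ 2)
    (fun x ⟨hx₀, hx₁⟩ => ?_) (fun x ⟨hx₀, hx₁⟩ => ?_)
  · have hx : x ^ 2 < 1 := by nlinarith
    have hs : 0 < √(1 - x ^ 2) := sqrt_pos.2 (by linarith)
    refine (((hasDerivAt_sqrt_one_sub_sq hx).mul (hasDerivAt_arcsin (by linarith) hx₁.ne)).div
      (hasDerivAt_id x) hx₀.ne').congr_deriv ?_
    simp only [id_eq, Pi.mul_apply]
    field_simp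
    linear_combination (-arcsin x) * sq_sqrt (by linarith : (0 : ℝ) ≤ 1 - x ^ 2)
  · have hs : 0 < √(1 - x ^ 2) := sqrt_pos.2 (by nlinarith)
    have h : x < arcsin x / √(1 - x ^ 2) :=
      (lt_div_iff₀ hs).2 (mul_sqrt_one_sub_sq_lt_arcsin hx₀ hx₁)
    exact div_neg_of_neg_of_pos (sub_neg.2 h) (by positivity)

theorem stmt_17 (α : ℝ) (hα : α ≤ 0) :
    StrictAntiOn (fun x : ℝ => (α + Real.sqrt (1 - x ^ 2)) * Real.arcsin x / x)
      (Set.Ioo 0 1) := by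
  have hαg : AntitoneOn (fun x => α * (arcsin x / x)) (Ioo 0 1) := fun x hx y hy hxy =>
    mul_le_mul_of_nonpos_left (strictMonoOn_arcsin_div.monotoneOn hx hy hxy) hα
  convert strictAntiOn_sqrt_one_sub_sq_mul_arcsin_div.add_antitone hαg using 2
  ring
end

section
/- For every real α ≥ 2 and every x ∈ (0,1), the function h_α(x) = x(α + √(1−x²)) / (1 + α√(1−x²)) − arcsin x is positive; equivalently, arcsin x < x(α + √(1−x²)) / (1 + α√(1−x²)). -/
/-!
Put `θ = arcsin x`, so that `x = sin θ` and `√(1 - x²) = cos θ`. The map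
`α ↦ (α + c) / (1 + α c)` is nondecreasing for `0 ≤ c ≤ 1`, which reduces the claim to `α = 2`,
i.e. to `θ (1 + 2 cos θ) < sin θ (2 + cos θ)`. The difference of the two sides vanishes at `0`
and has derivative `2 sin θ (θ - sin θ) > 0` on `(0, π)`.
-/

open Real Set

lemma mul_one_add_two_mul_cos_lt_sin_mul_two_add_cos {θ : ℝ} (h0 : 0 < θ) (hπ : θ ≤ π) :
    θ * (1 + 2 * cos θ) < sin θ * (2 + cos θ) := by
  set g : ℝ → ℝ := fun t => sin t * (2 + cos t) - t * (1 + 2 * cos t) with hg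
  have hderiv (t : ℝ) : HasDerivAt g (2 * sin t * (t - sin t)) t := by
    have h : HasDerivAt g (cos t * (2 + cos t) + sin t * (0 + -sin t)
        - (1 * (1 + 2 * cos t) + t * (0 + 2 * -sin t))) t :=
      ((hasDerivAt_sin t).mul ((hasDerivAt_const t 2).add (hasDerivAt_cos t))).sub
        ((hasDerivAt_id t).mul ((hasDerivAt_const t 1).add ((hasDerivAt_cos t).const_mul 2)))
    convert h using 1
    linear_combination -sin_sq_add_cos_sq t
  have hmono : StrictMonoOn g (Icc 0 π) := by
    refine strictMonoOn_of_deriv_pos (convex_Icc _ _) (by fun_prop) fun t ht => ?_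
    rw [interior_Icc] at ht
    rw [(hderiv t).deriv]
    have hsin_pos : 0 < sin t := sin_pos_of_pos_of_lt_pi ht.1 ht.2
    have hsin_lt : sin t < t := sin_lt ht.1
    nlinarith
  have h := hmono (left_mem_Icc.2 pi_pos.le) ⟨h0.le, hπ⟩ h0
  simp only [hg, sin_zero, cos_zero, zero_mul, zero_sub, neg_zero] at h
  linarith

lemma add_div_one_add_mul_le_of_le {a b c : ℝ} (ha : 0 ≤ a) (hab : a ≤ b) (hc0 : 0 ≤ c)
    (hc1 : c ≤ 1) : (a + c) / (1 + a * c) ≤ (b + c) / (1 + b * c) := by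
  rw [div_le_div_iff₀ (by positivity) (by nlinarith)]
  -- the difference of the two sides is `(b - a) (1 - c²)`
  nlinarith [mul_nonneg (sub_nonneg.2 hab) (mul_nonneg (sub_nonneg.2 hc1) (by linarith : 0 ≤ 1 + c))]

theorem stmt_18 (α : ℝ) (hα : 2 ≤ α) (x : ℝ) (hx : 0 < x) (hx1 : x < 1) :
    Real.arcsin x <
      x * (α + Real.sqrt (1 - x ^ 2)) / (1 + α * Real.sqrt (1 - x ^ 2)) := by
  set c := √(1 - x ^ 2) with hc
  have hc0 : 0 < c := sqrt_pos.2 (by nlinarith)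
  have hc1 : c ≤ 1 := sqrt_le_one.2 (by nlinarith)
  have hsin : sin (arcsin x) = x := sin_arcsin (by linarith) hx1.le
  have hcos : cos (arcsin x) = c := cos_arcsin x
  have hhuygens := mul_one_add_two_mul_cos_lt_sin_mul_two_add_cos (arcsin_pos.2 hx)
    ((arcsin_le_pi_div_two x).trans (by linarith [pi_pos]))
  rw [hsin, hcos] at hhuygens
  calc arcsin x < x * ((2 + c) / (1 + 2 * c)) := by
        rw [mul_div_assoc', lt_div_iff₀ (by positivity)]
        linarith
    _ ≤ x * ((α + c) / (1 + α * c)) :=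
        mul_le_mul_of_nonneg_left (add_div_one_add_mul_le_of_le zero_le_two hα hc0.le hc1) hx.le
    _ = x * (α + c) / (1 + α * c) := mul_div_assoc' ..
end

section
/- For every u with 0 ≤ u ≤ 1 and every real α with π/2 < α < 2, (α + u)² / (1 + αu) ≥ 4(1 − 1/α²). -/
/-! Once the positive denominator `1 + α u` is cleared, the gap between the two sides is the
perfect square `((α u - α² + 2) / α)²`. -/

lemma sq_add_sub_four_mul_one_sub_inv_sq_mul {α : ℝ} (hα : α ≠ 0) (u : ℝ) :
    (α + u) ^ 2 - 4 * (1 - 1 / α ^ 2) * (1 + α * u) = ((α * u - α ^ 2 + 2) / α) ^ 2 := by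
  field_simp
  ring

lemma four_mul_one_sub_inv_sq_le_div {α u : ℝ} (hα : α ≠ 0) (hpos : 0 < 1 + α * u) :
    4 * (1 - 1 / α ^ 2) ≤ (α + u) ^ 2 / (1 + α * u) := by
  rw [le_div_iff₀ hpos, ← sub_nonneg, sq_add_sub_four_mul_one_sub_inv_sq_mul hα]
  positivity

theorem stmt_19_general (u : ℝ) (hu : 0 ≤ u)
    (α : ℝ) (h1 : Real.pi / 2 < α) :
    (α + u) ^ 2 / (1 + α * u) ≥ 4 * (1 - 1 / α ^ 2) := by
  have hα : 0 < α := by linarith [Real.pi_pos]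
  exact four_mul_one_sub_inv_sq_le_div hα.ne' (by positivity)

theorem stmt_19 (u : ℝ) (hu : 0 ≤ u) (hu1 : u ≤ 1)
    (α : ℝ) (h1 : Real.pi / 2 < α) (h2 : α < 2) :
    (α + u) ^ 2 / (1 + α * u) ≥ 4 * (1 - 1 / α ^ 2) :=
  stmt_19_general u hu α h1
end
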